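/- arXiv:1508.01186 — 4 statements merged into one kernel-verified Lean document; each statement's English description precedes it below -/
import Mathlib

section
/- Let I ⊆ ℝ be an open interval and let x, y, z, φ, f : I × ℝ → ℝ be smooth functions with x_u² + y_u² > 0 everywhere, satisfying the evolution equations x_t = −φ·y_u/√(x_u²+y_u²), y_t = φ·x_u/√(x_u²+y_u²), z_t = f − φ·y·y_u/√(x_u²+y_u²). Then ∂_t(z_u − y·x_u) = f_u − φ·√(x_u²+y_u²) at every point of I × ℝ. Consequently, if φ = f_u/√(x_u²+y_u²) on all of I × ℝ and z_u − y·x_u vanishes identically at some time t₀ ∈ I, then z_u − y·x_u vanishes identically on I × ℝ. -/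
open Real Set Filter Function intervalIntegral

noncomputable section

/-- Partial derivative in the second (space) variable `u`. -/
def pu (x : ℝ → ℝ → ℝ) (t u : ℝ) : ℝ := deriv (fun v => x t v) u

/-- Second partial derivative in the space variable `u`. -/
def puu (x : ℝ → ℝ → ℝ) (t u : ℝ) : ℝ := deriv (fun v => deriv (fun w => x t w) v) u

/-- Partial derivative in the time variable `t`, taken within the time interval `J`. -/
def ptW (J : Set ℝ) (x : ℝ → ℝ → ℝ) (t u : ℝ) : ℝ := derivWithin (fun s => x s u) J t

/-- Speed `√(x_u² + y_u²)` of the planar curve. -/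
def speed (x y : ℝ → ℝ → ℝ) (t u : ℝ) : ℝ := Real.sqrt ((pu x t u)^2 + (pu y t u)^2)

/-- Curvature `κ = (x_u·y_uu − y_u·x_uu)/(x_u²+y_u²)^{3/2}` of the planar curve. -/
def curv (x y : ℝ → ℝ → ℝ) (t u : ℝ) : ℝ :=
  (pu x t u * puu y t u - pu y t u * puu x t u) / ((pu x t u)^2 + (pu y t u)^2) ^ ((3:ℝ)/2)

section Helpers

variable {S : Set (ℝ × ℝ)} {F : ℝ → ℝ → ℝ}

private lemma lineD1 (t u : ℝ) : HasDerivAt (fun s : ℝ => (s, u)) ((1:ℝ), (0:ℝ)) t :=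
  (hasDerivAt_id t).prodMk (hasDerivAt_const t u)

private lemma lineD2 (t u : ℝ) : HasDerivAt (fun v : ℝ => (t, v)) ((0:ℝ), (1:ℝ)) u :=
  (hasDerivAt_const u t).prodMk (hasDerivAt_id u)

private lemma sliceU (hS : IsOpen S) (hF : ContDiffOn ℝ (⊤ : ℕ∞) (fun p : ℝ × ℝ => F p.1 p.2) S)
    {s u : ℝ} (h : (s, u) ∈ S) :
    HasDerivAt (fun v => F s v) (fderiv ℝ (fun p : ℝ × ℝ => F p.1 p.2) (s, u) (0, 1)) u :=
  ((hF.contDiffAt (hS.mem_nhds h)).differentiableAt (by simp)).hasFDerivAt.comp_hasDerivAt u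
    (lineD2 s u)

private lemma sliceT (hS : IsOpen S) (hF : ContDiffOn ℝ (⊤ : ℕ∞) (fun p : ℝ × ℝ => F p.1 p.2) S)
    {t u : ℝ} (h : (t, u) ∈ S) :
    HasDerivAt (fun s => F s u) (fderiv ℝ (fun p : ℝ × ℝ => F p.1 p.2) (t, u) (1, 0)) t :=
  ((hF.contDiffAt (hS.mem_nhds h)).differentiableAt (by simp)).hasFDerivAt.comp_hasDerivAt
    (f := fun s : ℝ => (s, u)) t (lineD1 t u)

private lemma mixedA (hS : IsOpen S) (hF : ContDiffOn ℝ (⊤ : ℕ∞) (fun p : ℝ × ℝ => F p.1 p.2) S)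
    {t u : ℝ} (h : (t, u) ∈ S) :
    HasDerivAt (fun s => pu F s u)
      (fderiv ℝ (fderiv ℝ (fun p : ℝ × ℝ => F p.1 p.2)) (t, u) (1, 0) (0, 1)) t := by
  have hca := hF.contDiffAt (hS.mem_nhds h)
  have hdf : DifferentiableAt ℝ (fderiv ℝ (fun p : ℝ × ℝ => F p.1 p.2)) (t, u) :=
    (hca.fderiv_right (m := 1) (by exact WithTop.coe_le_coe.2 (le_top : ((1 + 1 : ℕ) : ℕ∞) ≤ ⊤))).differentiableAt one_ne_zero
  have h1 : HasDerivAt (fun s => fderiv ℝ (fun p : ℝ × ℝ => F p.1 p.2) (s, u))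
      (fderiv ℝ (fderiv ℝ (fun p : ℝ × ℝ => F p.1 p.2)) (t, u) (1, 0)) t :=
    hdf.hasFDerivAt.comp_hasDerivAt t (lineD1 t u)
  have h2 : HasDerivAt (fun s => fderiv ℝ (fun p : ℝ × ℝ => F p.1 p.2) (s, u) ((0:ℝ), (1:ℝ)))
      (fderiv ℝ (fderiv ℝ (fun p : ℝ × ℝ => F p.1 p.2)) (t, u) (1, 0) (0, 1)) t :=
    (ContinuousLinearMap.apply ℝ ℝ ((0:ℝ), (1:ℝ))).hasFDerivAt.comp_hasDerivAt t h1
  apply h2.congr_of_eventuallyEq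
  have hev : ∀ᶠ s in nhds t, (s, u) ∈ S :=
    ((continuous_id.prodMk continuous_const).continuousAt (x := t)).eventually_mem
      (hS.mem_nhds h)
  filter_upwards [hev] with s hs
  exact (sliceU hS hF hs).deriv

private lemma mixedB (hS : IsOpen S) (hF : ContDiffOn ℝ (⊤ : ℕ∞) (fun p : ℝ × ℝ => F p.1 p.2) S)
    {t u : ℝ} (h : (t, u) ∈ S) :
    HasDerivAt (fun v => deriv (fun s => F s v) t)
      (fderiv ℝ (fderiv ℝ (fun p : ℝ × ℝ => F p.1 p.2)) (t, u) (0, 1) (1, 0)) u := by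
  have hca := hF.contDiffAt (hS.mem_nhds h)
  have hdf : DifferentiableAt ℝ (fderiv ℝ (fun p : ℝ × ℝ => F p.1 p.2)) (t, u) :=
    (hca.fderiv_right (m := 1) (by exact WithTop.coe_le_coe.2 (le_top : ((1 + 1 : ℕ) : ℕ∞) ≤ ⊤))).differentiableAt one_ne_zero
  have h1 : HasDerivAt (fun v => fderiv ℝ (fun p : ℝ × ℝ => F p.1 p.2) (t, v))
      (fderiv ℝ (fderiv ℝ (fun p : ℝ × ℝ => F p.1 p.2)) (t, u) (0, 1)) u :=
    hdf.hasFDerivAt.comp_hasDerivAt u (lineD2 t u)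
  have h2 : HasDerivAt (fun v => fderiv ℝ (fun p : ℝ × ℝ => F p.1 p.2) (t, v) ((1:ℝ), (0:ℝ)))
      (fderiv ℝ (fderiv ℝ (fun p : ℝ × ℝ => F p.1 p.2)) (t, u) (0, 1) (1, 0)) u :=
    (ContinuousLinearMap.apply ℝ ℝ ((1:ℝ), (0:ℝ))).hasFDerivAt.comp_hasDerivAt u h1
  apply h2.congr_of_eventuallyEq
  have hev : ∀ᶠ v in nhds u, (t, v) ∈ S :=
    ((continuous_const.prodMk continuous_id).continuousAt (x := u)).eventually_mem
      (hS.mem_nhds h)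
  filter_upwards [hev] with v hv
  exact (sliceT hS hF hv).deriv

private lemma mixed (hS : IsOpen S) (hF : ContDiffOn ℝ (⊤ : ℕ∞) (fun p : ℝ × ℝ => F p.1 p.2) S)
    {t u : ℝ} (h : (t, u) ∈ S) :
    HasDerivAt (fun s => pu F s u) (deriv (fun v => deriv (fun s => F s v) t) u) t := by
  have hsym := (hF.contDiffAt (hS.mem_nhds h)).isSymmSndFDerivAt
    (by rw [minSmoothness_of_isRCLikeNormedField]; exact WithTop.coe_le_coe.2 (le_top : ((2 : ℕ) : ℕ∞) ≤ ⊤))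
  rw [(mixedB hS hF h).deriv, hsym ((0:ℝ),(1:ℝ)) ((1:ℝ),(0:ℝ))]
  exact mixedA hS hF h

private lemma sliceSmooth (hS : IsOpen S) (hF : ContDiffOn ℝ (⊤ : ℕ∞) (fun p : ℝ × ℝ => F p.1 p.2) S)
    {t : ℝ} (h : ∀ v : ℝ, (t, v) ∈ S) :
    ContDiff ℝ ((⊤ : ℕ∞) : WithTop ℕ∞) (fun v => F t v) := by
  rw [contDiff_iff_contDiffAt]
  intro v
  exact ((hF.contDiffAt (hS.mem_nhds (h v))).of_le (by simp)).comp v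
    ((contDiff_const.prodMk contDiff_id).contDiffAt)

private lemma sliceDerivSmooth (hS : IsOpen S)
    (hF : ContDiffOn ℝ (⊤ : ℕ∞) (fun p : ℝ × ℝ => F p.1 p.2) S)
    {t : ℝ} (h : ∀ v : ℝ, (t, v) ∈ S) :
    ContDiff ℝ ((⊤ : ℕ∞) : WithTop ℕ∞) (fun v => pu F t v) :=
  (contDiff_infty_iff_deriv.1 (sliceSmooth hS hF h)).2

end Helpers

/-- A normal variation `γ_t = φN + fξ` of a curve in the contact manifold
`(ℝ³, dz − y dx)` satisfies `∂_t(z_u − y·x_u) = f_u − φ·√(x_u²+y_u²)`; consequently, if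
`φ = f_u/√(x_u²+y_u²)` and the Legendrian condition `z_u − y·x_u = 0` holds at one time,
it holds at all times. -/
theorem statement0 (I : Set ℝ) (hIopen : IsOpen I) (hIinterval : Convex ℝ I)
    (x y z φ f : ℝ → ℝ → ℝ)
    (hx : ContDiffOn ℝ (⊤ : ℕ∞) (fun p : ℝ × ℝ => x p.1 p.2) (I ×ˢ (univ : Set ℝ)))
    (hy : ContDiffOn ℝ (⊤ : ℕ∞) (fun p : ℝ × ℝ => y p.1 p.2) (I ×ˢ (univ : Set ℝ)))
    (hz : ContDiffOn ℝ (⊤ : ℕ∞) (fun p : ℝ × ℝ => z p.1 p.2) (I ×ˢ (univ : Set ℝ)))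
    (hφ : ContDiffOn ℝ (⊤ : ℕ∞) (fun p : ℝ × ℝ => φ p.1 p.2) (I ×ˢ (univ : Set ℝ)))
    (hf : ContDiffOn ℝ (⊤ : ℕ∞) (fun p : ℝ × ℝ => f p.1 p.2) (I ×ˢ (univ : Set ℝ)))
    (himm : ∀ t ∈ I, ∀ u : ℝ, 0 < (pu x t u)^2 + (pu y t u)^2)
    (hxt : ∀ t ∈ I, ∀ u : ℝ,
      deriv (fun s => x s u) t = -(φ t u) * pu y t u / speed x y t u)
    (hyt : ∀ t ∈ I, ∀ u : ℝ,
      deriv (fun s => y s u) t = φ t u * pu x t u / speed x y t u)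
    (hzt : ∀ t ∈ I, ∀ u : ℝ,
      deriv (fun s => z s u) t = f t u - φ t u * y t u * pu y t u / speed x y t u) :
    (∀ t ∈ I, ∀ u : ℝ,
      deriv (fun s => pu z s u - y s u * pu x s u) t = pu f t u - φ t u * speed x y t u) ∧
    ((∀ t ∈ I, ∀ u : ℝ, φ t u = pu f t u / speed x y t u) →
      ∀ t₀ ∈ I, (∀ u : ℝ, pu z t₀ u - y t₀ u * pu x t₀ u = 0) →
        ∀ t ∈ I, ∀ u : ℝ, pu z t u - y t u * pu x t u = 0) := by
  have hS : IsOpen (I ×ˢ (univ : Set ℝ)) := hIopen.prod isOpen_univ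
  have hmem : ∀ t ∈ I, ∀ u : ℝ, (t, u) ∈ I ×ˢ (univ : Set ℝ) := fun t ht u => ⟨ht, trivial⟩
  have one_le : (1 : WithTop ℕ∞) ≤ ((⊤ : ℕ∞) : WithTop ℕ∞) := by
    exact_mod_cast le_top
  have key : ∀ t ∈ I, ∀ u : ℝ,
      HasDerivAt (fun s => pu z s u - y s u * pu x s u)
        (pu f t u - φ t u * speed x y t u) t := by
    intro t ht u
    have hpos := himm t ht u
    have hs0 : 0 < speed x y t u := Real.sqrt_pos.2 hpos
    have hall : ∀ v : ℝ, (t, v) ∈ I ×ˢ (univ : Set ℝ) := fun v => ⟨ht, trivial⟩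
    have sx := sliceDerivSmooth hS hx hall
    have sy := sliceDerivSmooth hS hy hall
    have sYs := sliceSmooth hS hy hall
    have sF := sliceSmooth hS hf hall
    have sPhi := sliceSmooth hS hφ hall
    have hdax : DifferentiableAt ℝ (fun v => pu x t v) u := (sx.differentiable (by simp)) u
    have hday : DifferentiableAt ℝ (fun v => pu y t v) u := (sy.differentiable (by simp)) u
    have hdsq : DifferentiableAt ℝ (fun v => (pu x t v)^2 + (pu y t v)^2) u :=
      (hdax.pow 2).add (hday.pow 2)
    have hdspeed : DifferentiableAt ℝ (fun v => speed x y t v) u := by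
      have h1 : DifferentiableAt ℝ Real.sqrt ((pu x t u)^2 + (pu y t u)^2) :=
        (Real.contDiffAt_sqrt (n := 1) (ne_of_gt hpos)).differentiableAt one_ne_zero
      exact h1.comp u hdsq
    set g : ℝ → ℝ := fun v => φ t v * pu y t v / speed x y t v with hg_def
    have hdφ : DifferentiableAt ℝ (fun v => φ t v) u := (sPhi.differentiable (by simp)) u
    have hdg : DifferentiableAt ℝ g u := (hdφ.mul hday).div hdspeed hs0.ne'
    have hdy : DifferentiableAt ℝ (fun v => y t v) u := (sYs.differentiable (by simp)) u
    have hdf2 : DifferentiableAt ℝ (fun v => f t v) u := (sF.differentiable (by simp)) u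
    have Ez : (fun v => deriv (fun s => z s v) t) = fun v => f t v - y t v * g v := by
      funext v; rw [hzt t ht v]; simp only [hg_def]; ring
    have hz1 : HasDerivAt (fun v => f t v - y t v * g v)
        (pu f t u - (pu y t u * g u + y t u * deriv g u)) u :=
      hdf2.hasDerivAt.sub (hdy.hasDerivAt.mul hdg.hasDerivAt)
    have hzmix := mixed hS hz (hmem t ht u)
    have hzval : deriv (fun v => deriv (fun s => z s v) t) u
        = pu f t u - (pu y t u * g u + y t u * deriv g u) := by
      rw [Ez]; exact hz1.deriv
    rw [hzval] at hzmix
    have Ex : (fun v => deriv (fun s => x s v) t) = fun v => -g v := by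
      funext v; rw [hxt t ht v]; simp only [hg_def]; ring
    have hx1 : HasDerivAt (fun v => -g v) (-deriv g u) u := hdg.hasDerivAt.neg
    have hxmix := mixed hS hx (hmem t ht u)
    have hxval : deriv (fun v => deriv (fun s => x s v) t) u = -deriv g u := by
      rw [Ex]; exact hx1.deriv
    rw [hxval] at hxmix
    have hyT : HasDerivAt (fun s => y s u) (φ t u * pu x t u / speed x y t u) t := by
      rw [← hyt t ht u]
      exact (sliceT hS hy (hmem t ht u)).differentiableAt.hasDerivAt
    have Hw := hzmix.sub (hyT.mul hxmix)
    refine Hw.congr_deriv ?_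
    have hss : speed x y t u * speed x y t u = (pu x t u)^2 + (pu y t u)^2 :=
      Real.mul_self_sqrt hpos.le
    have hgu : g u = φ t u * pu y t u / speed x y t u := rfl
    rw [hgu]
    have hs2 : speed x y t u ^ 2 = (pu x t u)^2 + (pu y t u)^2 := Real.sq_sqrt hpos.le
    field_simp
    linear_combination (φ t u) * hs2
  refine ⟨fun t ht u => (key t ht u).deriv, ?_⟩
  intro hφeq t₀ ht₀ h0 t ht u
  have key0 : ∀ t' ∈ I, HasDerivAt (fun s => pu z s u - y s u * pu x s u) 0 t' := by
    intro t' ht'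
    have h1 := key t' ht' u
    have hs0 : 0 < speed x y t' u := Real.sqrt_pos.2 (himm t' ht' u)
    rwa [hφeq t' ht' u, div_mul_cancel₀ _ hs0.ne', sub_self] at h1
  have hconst : (fun s => pu z s u - y s u * pu x s u) t
      = (fun s => pu z s u - y s u * pu x s u) t₀ := by
    apply hIinterval.is_const_of_fderivWithin_eq_zero
      (fun t' ht' => (key0 t' ht').differentiableAt.differentiableWithinAt) ?_ ht ht₀
    intro t' ht'
    rw [fderivWithin_of_isOpen hIopen ht',
      (hasDerivAt_iff_hasFDerivAt.1 (key0 t' ht')).fderiv]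
    exact ContinuousLinearMap.ext fun v => by simp
  exact hconst.trans (h0 u)
end
end

section
/- Let γ = (x,y) : J × ℝ → ℝ² be a smooth solution of the curve shortening flow, 2π-periodic in u and immersed. Then the total turning t ↦ ∫₀^{2π} κ(t,u)·√(x_u²+y_u²) du is constant in t (its time derivative is zero). -/
open Real Set Filter Function intervalIntegral

noncomputable section

/-- Curve shortening flow on the time interval `J`: smooth, `2π`-periodic in `u`,
immersed, and satisfying `x_t = −κ·y_u/√(x_u²+y_u²)`, `y_t = κ·x_u/√(x_u²+y_u²)`. -/
def IsCSF (J : Set ℝ) (x y : ℝ → ℝ → ℝ) : Prop :=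
  ContDiffOn ℝ (⊤ : ℕ∞) (fun p : ℝ × ℝ => (x p.1 p.2, y p.1 p.2)) (J ×ˢ (univ : Set ℝ)) ∧
  (∀ t ∈ J, Function.Periodic (x t) (2 * π) ∧ Function.Periodic (y t) (2 * π)) ∧
  (∀ t ∈ J, ∀ u, 0 < (pu x t u)^2 + (pu y t u)^2) ∧
  (∀ t ∈ J, ∀ u,
    ptW J x t u = -(curv x y t u) * pu y t u / speed x y t u ∧
    ptW J y t u = curv x y t u * pu x t u / speed x y t u)


open MeasureTheory in
lemma curv_mul_speed {x y : ℝ → ℝ → ℝ} {t u : ℝ}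
    (hr : 0 < (pu x t u)^2 + (pu y t u)^2) :
    curv x y t u * speed x y t u =
      (pu x t u * puu y t u - pu y t u * puu x t u) / ((pu x t u)^2 + (pu y t u)^2) := by
  unfold curv speed
  set r := (pu x t u)^2 + (pu y t u)^2 with hrdef
  have h32 : (3:ℝ)/2 = 1/2 + 1 := by norm_num
  rw [Real.sqrt_eq_rpow, h32, Real.rpow_add hr, Real.rpow_one]
  have h12 : r ^ ((1:ℝ)/2) ≠ 0 := (Real.rpow_pos_of_pos hr _).ne'
  field_simp

open MeasureTheory in
lemma im_div (a b c d : ℝ) (h : 0 < c^2 + d^2) :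
    (((a:ℂ) + (b:ℂ)*Complex.I)/((c:ℂ) + (d:ℂ)*Complex.I)).im = (c*b - d*a)/(c^2+d^2) := by
  rw [Complex.div_im]
  simp only [Complex.add_im, Complex.add_re, Complex.ofReal_re, Complex.ofReal_im,
    Complex.mul_im, Complex.mul_re, Complex.I_re, Complex.I_im, Complex.normSq_apply]
  rw [div_sub_div_same, div_eq_div_iff (by nlinarith) (by positivity)]
  ring

open MeasureTheory in
lemma deriv_rep {J : Set ℝ} (hS : UniqueDiffOn ℝ (J ×ˢ (univ : Set ℝ)))
    {h : ℝ × ℝ → ℝ} (hh : ContDiffOn ℝ (⊤ : ℕ∞) h (J ×ˢ (univ : Set ℝ))) :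
    ContDiffOn ℝ (⊤ : ℕ∞) (fun p : ℝ × ℝ => fderivWithin ℝ h (J ×ˢ (univ : Set ℝ)) p ((0:ℝ), (1:ℝ)))
      (J ×ˢ (univ : Set ℝ)) ∧
      ∀ t ∈ J, ∀ u : ℝ, deriv (fun v => h (t, v)) u
        = fderivWithin ℝ h (J ×ˢ (univ : Set ℝ)) (t, u) ((0:ℝ), (1:ℝ)) := by
  constructor
  · exact (hh.fderivWithin hS (by simp)).clm_apply contDiffOn_const
  · intro t ht u
    have hmem : ((t, u) : ℝ × ℝ) ∈ J ×ˢ (univ : Set ℝ) := ⟨ht, trivial⟩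
    have hdiff := (hh.differentiableOn (by simp)) _ hmem
    have hF := hdiff.hasFDerivWithinAt
    have hι : HasDerivAt (fun v : ℝ => ((t, v) : ℝ × ℝ)) ((0:ℝ), (1:ℝ)) u :=
      (hasDerivAt_const u t).prodMk (hasDerivAt_id u)
    have hmaps : MapsTo (fun v : ℝ => ((t, v) : ℝ × ℝ)) (univ : Set ℝ) (J ×ˢ (univ : Set ℝ)) :=
      fun v _ => ⟨ht, trivial⟩
    have hc := hF.comp_hasDerivWithinAt u hι.hasDerivWithinAt hmaps
    rw [hasDerivWithinAt_univ] at hc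
    exact hc.deriv

open MeasureTheory in
lemma slice_smooth {J : Set ℝ} {x y : ℝ → ℝ → ℝ}
    (h : ContDiffOn ℝ (⊤ : ℕ∞) (fun p : ℝ × ℝ => (x p.1 p.2, y p.1 p.2)) (J ×ˢ (univ : Set ℝ)))
    {t : ℝ} (ht : t ∈ J) : ContDiff ℝ (⊤ : ℕ∞) (x t) ∧ ContDiff ℝ (⊤ : ℕ∞) (y t) := by
  have hmap : MapsTo (fun u : ℝ => ((t, u) : ℝ × ℝ)) univ (J ×ˢ (univ : Set ℝ)) :=
    fun u _ => ⟨ht, trivial⟩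
  have h2 := h.comp ((contDiff_const.prodMk contDiff_id).contDiffOn) hmap
  rw [contDiffOn_univ] at h2
  exact ⟨(contDiff_fst.comp h2 : _), (contDiff_snd.comp h2 : _)⟩

open MeasureTheory in
lemma integer_turning {x y : ℝ → ℝ → ℝ} {t : ℝ}
    (hx : ContDiff ℝ (⊤ : ℕ∞) (x t)) (hy : ContDiff ℝ (⊤ : ℕ∞) (y t))
    (hpx : Function.Periodic (x t) (2 * π)) (hpy : Function.Periodic (y t) (2 * π))
    (himm : ∀ u, 0 < (pu x t u)^2 + (pu y t u)^2) :
    ∃ n : ℤ, (∫ u in (0:ℝ)..(2*π), curv x y t u * speed x y t u) = n * (2*π) := by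
  -- slices are C^∞
  have hx' : ContDiff ℝ (⊤:ℕ∞) (x t) := hx.of_le (by simp)
  have hy' : ContDiff ℝ (⊤:ℕ∞) (y t) := hy.of_le (by simp)
  set X : ℝ → ℝ := deriv (x t) with hXdef
  set Y : ℝ → ℝ := deriv (y t) with hYdef
  have hXc : ContDiff ℝ (⊤:ℕ∞) X := (contDiff_infty_iff_deriv.mp hx').2
  have hYc : ContDiff ℝ (⊤:ℕ∞) Y := (contDiff_infty_iff_deriv.mp hy').2
  have hXd : Differentiable ℝ X := (contDiff_infty_iff_deriv.mp hXc).1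
  have hYd : Differentiable ℝ Y := (contDiff_infty_iff_deriv.mp hYc).1
  have hX'c : Continuous (deriv X) := hXc.continuous_deriv (by simp)
  have hY'c : Continuous (deriv Y) := hYc.continuous_deriv (by simp)
  -- basic identifications
  have hpuX : ∀ u, pu x t u = X u := fun u => rfl
  have hpuY : ∀ u, pu y t u = Y u := fun u => rfl
  have hpuuX : ∀ u, puu x t u = deriv X u := fun u => rfl
  have hpuuY : ∀ u, puu y t u = deriv Y u := fun u => rfl
  -- the complex tangent vector
  set Z : ℝ → ℂ := fun u => (X u : ℂ) + (Y u : ℂ) * Complex.I with hZdef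
  set Zd : ℝ → ℂ := fun u => Complex.ofReal (deriv X u) + Complex.ofReal (deriv Y u) * Complex.I with hZddef
  have hZcont : Continuous Z := by
    exact (Complex.continuous_ofReal.comp hXc.continuous).add
      ((Complex.continuous_ofReal.comp hYc.continuous).mul continuous_const)
  have hZdcont : Continuous Zd := by
    exact (Complex.continuous_ofReal.comp hX'c).add
      ((Complex.continuous_ofReal.comp hY'c).mul continuous_const)
  have hZderiv : ∀ u, HasDerivAt Z (Zd u) u := by
    intro u
    have h1 : HasDerivAt (fun v => Complex.ofReal (X v)) (Complex.ofReal (deriv X u)) u :=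
      ((hXd u).hasDerivAt).ofReal_comp
    have h2 : HasDerivAt (fun v => Complex.ofReal (Y v)) (Complex.ofReal (deriv Y u)) u :=
      ((hYd u).hasDerivAt).ofReal_comp
    exact h1.add (h2.mul_const Complex.I)
  have hZne : ∀ u, Z u ≠ 0 := by
    intro u hzero
    rw [hZdef] at hzero
    simp only [Complex.ext_iff, Complex.add_re, Complex.add_im, Complex.ofReal_re,
      Complex.ofReal_im, Complex.mul_re, Complex.mul_im, Complex.I_re, Complex.I_im,
      Complex.zero_re, Complex.zero_im] at hzero
    have h1 : X u = 0 := by nlinarith [hzero.1, hzero.2]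
    have h2 : Y u = 0 := by nlinarith [hzero.1, hzero.2]
    have := himm u
    rw [hpuX, hpuY, h1, h2] at this
    norm_num at this
  set h : ℝ → ℂ := fun u => Zd u / Z u with hhdef
  have hhcont : Continuous h := hZdcont.div hZcont hZne
  set g : ℝ → ℂ := fun w => ∫ s in (0:ℝ)..w, h s with hgdef
  have hg : ∀ w, HasDerivAt g (h w) w := fun w =>
    (hhcont.integral_hasStrictDerivAt 0 w).hasDerivAt
  set W : ℝ → ℂ := fun w => Z w * Complex.exp (-g w) with hWdef
  have hW : ∀ w, HasDerivAt W 0 w := by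
    intro w
    have h1 : HasDerivAt (fun w => Complex.exp (-g w)) (Complex.exp (-g w) * (-(h w))) w :=
      ((hg w).neg).cexp
    have h2 := (hZderiv w).mul h1
    have hne := hZne w
    have h3 : Zd w * Complex.exp (-g w) + Z w * (Complex.exp (-g w) * -h w) = 0 := by
      show Zd w * Complex.exp (-g w) + Z w * (Complex.exp (-g w) * -(Zd w / Z w)) = 0
      have hq : Z w * (Zd w / Z w) = Zd w := mul_div_cancel₀ _ hne
      linear_combination (-(Complex.exp (-g w))) * hq
    rw [h3] at h2
    exact h2
  have hWconst : W (2*π) = W 0 :=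
    is_const_of_deriv_eq_zero (fun w => (hW w).differentiableAt) (fun w => (hW w).deriv) _ _
  -- periodicity
  have hXper : X (2*π) = X 0 := by
    have : (fun v => x t (v + 2*π)) = x t := funext hpx
    have hd := deriv_comp_add_const (x t) (2*π) 0
    rw [this] at hd
    simpa using hd.symm
  have hYper : Y (2*π) = Y 0 := by
    have : (fun v => y t (v + 2*π)) = y t := funext hpy
    have hd := deriv_comp_add_const (y t) (2*π) 0
    rw [this] at hd
    simpa using hd.symm
  have hZper : Z (2*π) = Z 0 := by rw [hZdef]; simp only [hXper, hYper]
  have hg0 : g 0 = 0 := intervalIntegral.integral_same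
  have hexp1 : Complex.exp (-g (2*π)) = 1 := by
    have := hWconst
    rw [hWdef] at this
    simp only at this
    rw [hZper, hg0, neg_zero, Complex.exp_zero] at this
    exact mul_left_cancel₀ (hZne 0) this
  obtain ⟨n, hn⟩ := Complex.exp_eq_one_iff.mp hexp1
  refine ⟨-n, ?_⟩
  -- imaginary part
  have hint : IntervalIntegrable h volume 0 (2*π) := hhcont.intervalIntegrable _ _
  have him : (g (2*π)).im = ∫ u in (0:ℝ)..(2*π), (h u).im := by
    have := Complex.imCLM.intervalIntegral_comp_comm hint
    simp only [Complex.imCLM_apply] at this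
    rw [hgdef]; exact this.symm
  have hkey : ∀ u, curv x y t u * speed x y t u = (h u).im := by
    intro u
    rw [curv_mul_speed (himm u)]
    have hr := himm u
    rw [hpuX, hpuY] at hr ⊢
    rw [hpuuX, hpuuY]
    have : h u = (Complex.ofReal (deriv X u) + Complex.ofReal (deriv Y u)*Complex.I)/(Complex.ofReal (X u) + Complex.ofReal (Y u)*Complex.I) := rfl
    rw [this, im_div _ _ _ _ hr]
  have hIeq : (∫ u in (0:ℝ)..(2*π), curv x y t u * speed x y t u)
      = (g (2*π)).im := by
    rw [him]
    exact intervalIntegral.integral_congr (fun u _ => hkey u)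
  rw [hIeq]
  have : g (2*π) = -(n * (2 * π * Complex.I)) := by
    have := hn
    linear_combination -this
  rw [this]
  simp [Complex.mul_im, Complex.mul_re]

open MeasureTheory in
lemma phi_exists {J : Set ℝ} {x y : ℝ → ℝ → ℝ} (hJ : Convex ℝ J)
    (hne : (interior J).Nonempty)
    (hsm : ContDiffOn ℝ (⊤ : ℕ∞) (fun p : ℝ × ℝ => (x p.1 p.2, y p.1 p.2)) (J ×ˢ (univ : Set ℝ)))
    (himm : ∀ t ∈ J, ∀ u : ℝ, 0 < (pu x t u)^2 + (pu y t u)^2) :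
    ∃ Φ : ℝ × ℝ → ℝ, ContinuousOn Φ (J ×ˢ (univ : Set ℝ)) ∧
      ∀ t ∈ J, ∀ u : ℝ, Φ (t, u) = curv x y t u * speed x y t u := by
  have hS : UniqueDiffOn ℝ (J ×ˢ (univ : Set ℝ)) :=
    (uniqueDiffOn_convex hJ hne).prod uniqueDiffOn_univ
  have hfx : ContDiffOn ℝ (⊤ : ℕ∞) (fun p : ℝ × ℝ => x p.1 p.2) (J ×ˢ (univ : Set ℝ)) := hsm.fst
  have hfy : ContDiffOn ℝ (⊤ : ℕ∞) (fun p : ℝ × ℝ => y p.1 p.2) (J ×ˢ (univ : Set ℝ)) := hsm.snd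
  obtain ⟨hX1, hX1eq⟩ := deriv_rep hS hfx
  obtain ⟨hY1, hY1eq⟩ := deriv_rep hS hfy
  obtain ⟨hX2, hX2eq⟩ := deriv_rep hS hX1
  obtain ⟨hY2, hY2eq⟩ := deriv_rep hS hY1
  set X1 : ℝ × ℝ → ℝ :=
    fun p => fderivWithin ℝ (fun p : ℝ × ℝ => x p.1 p.2) (J ×ˢ (univ : Set ℝ)) p ((0:ℝ),(1:ℝ))
    with hX1def
  set Y1 : ℝ × ℝ → ℝ :=
    fun p => fderivWithin ℝ (fun p : ℝ × ℝ => y p.1 p.2) (J ×ˢ (univ : Set ℝ)) p ((0:ℝ),(1:ℝ))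
    with hY1def
  set X2 : ℝ × ℝ → ℝ := fun p => fderivWithin ℝ X1 (J ×ˢ (univ : Set ℝ)) p ((0:ℝ),(1:ℝ))
    with hX2def
  set Y2 : ℝ × ℝ → ℝ := fun p => fderivWithin ℝ Y1 (J ×ˢ (univ : Set ℝ)) p ((0:ℝ),(1:ℝ))
    with hY2def
  -- identifications
  have hpux : ∀ t ∈ J, ∀ u : ℝ, pu x t u = X1 (t, u) := fun t ht u => hX1eq t ht u
  have hpuy : ∀ t ∈ J, ∀ u : ℝ, pu y t u = Y1 (t, u) := fun t ht u => hY1eq t ht u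
  have hpuux : ∀ t ∈ J, ∀ u : ℝ, puu x t u = X2 (t, u) := by
    intro t ht u
    have hfun : (fun v => deriv (fun w => x t w) v) = fun v => X1 (t, v) :=
      funext (fun v => hX1eq t ht v)
    have : puu x t u = deriv (fun v => X1 (t, v)) u := by rw [puu, hfun]
    rw [this]
    exact hX2eq t ht u
  have hpuuy : ∀ t ∈ J, ∀ u : ℝ, puu y t u = Y2 (t, u) := by
    intro t ht u
    have hfun : (fun v => deriv (fun w => y t w) v) = fun v => Y1 (t, v) :=
      funext (fun v => hY1eq t ht v)
    have : puu y t u = deriv (fun v => Y1 (t, v)) u := by rw [puu, hfun]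
    rw [this]
    exact hY2eq t ht u
  refine ⟨fun p => (X1 p * Y2 p - Y1 p * X2 p) / (X1 p ^ 2 + Y1 p ^ 2), ?_, ?_⟩
  · apply ContinuousOn.div
    · exact ((hX1.continuousOn.mul hY2.continuousOn).sub
        (hY1.continuousOn.mul hX2.continuousOn))
    · exact ((hX1.continuousOn.pow 2).add (hY1.continuousOn.pow 2))
    · rintro ⟨t, u⟩ ⟨ht, -⟩
      have := himm t ht u
      rw [hpux t ht u, hpuy t ht u] at this
      positivity
  · intro t ht u
    show (X1 (t,u) * Y2 (t,u) - Y1 (t,u) * X2 (t,u)) / (X1 (t,u) ^ 2 + Y1 (t,u) ^ 2)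
      = curv x y t u * speed x y t u
    rw [← hpux t ht u, ← hpuy t ht u, ← hpuux t ht u, ← hpuuy t ht u,
      curv_mul_speed (himm t ht u)]

open MeasureTheory in
lemma cont_u {x y : ℝ → ℝ → ℝ} {t : ℝ}
    (hx : ContDiff ℝ (⊤ : ℕ∞) (x t)) (hy : ContDiff ℝ (⊤ : ℕ∞) (y t))
    (himm : ∀ u : ℝ, 0 < (pu x t u)^2 + (pu y t u)^2) :
    Continuous (fun u => curv x y t u * speed x y t u) := by
  have hx' : ContDiff ℝ (⊤:ℕ∞) (x t) := hx.of_le (by simp)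
  have hy' : ContDiff ℝ (⊤:ℕ∞) (y t) := hy.of_le (by simp)
  have hXc : ContDiff ℝ (⊤:ℕ∞) (deriv (x t)) := (contDiff_infty_iff_deriv.mp hx').2
  have hYc : ContDiff ℝ (⊤:ℕ∞) (deriv (y t)) := (contDiff_infty_iff_deriv.mp hy').2
  have hpux : Continuous (fun u => pu x t u) := hXc.continuous
  have hpuy : Continuous (fun u => pu y t u) := hYc.continuous
  have hpuux : Continuous (fun u => puu x t u) := hXc.continuous_deriv (by simp)
  have hpuuy : Continuous (fun u => puu y t u) := hYc.continuous_deriv (by simp)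
  have hr : Continuous (fun u => (pu x t u)^2 + (pu y t u)^2) :=
    (hpux.pow 2).add (hpuy.pow 2)
  have hcurv : Continuous (fun u => curv x y t u) := by
    apply Continuous.div
    · exact (hpux.mul hpuuy).sub (hpuy.mul hpuux)
    · exact hr.rpow_const (fun u => Or.inl (himm u).ne')
    · exact fun u => (Real.rpow_pos_of_pos (himm u) _).ne'
  exact hcurv.mul (continuous_sqrt.comp hr)

open MeasureTheory in
lemma const_main {J : Set ℝ} {x y : ℝ → ℝ → ℝ} (hJ : Convex ℝ J) (hcsf : IsCSF J x y)
    {t₁ t₂ : ℝ} (h1 : t₁ ∈ J) (h2 : t₂ ∈ J) (hlt : t₁ < t₂) :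
    (∫ u in (0:ℝ)..(2*π), curv x y t₁ u * speed x y t₁ u)
      = ∫ u in (0:ℝ)..(2*π), curv x y t₂ u * speed x y t₂ u := by
  obtain ⟨hsm, hper, himm, -⟩ := hcsf
  have hIcc : Icc t₁ t₂ ⊆ J := hJ.ordConnected.out h1 h2
  have hne : (interior J).Nonempty := by
    refine (nonempty_Ioo.mpr hlt).mono ?_
    refine interior_maximal (fun s hs => hIcc ⟨le_of_lt hs.1, le_of_lt hs.2⟩) isOpen_Ioo
  obtain ⟨Φ, hΦcont, hΦeq⟩ := phi_exists hJ hne hsm himm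
  set I : ℝ → ℝ := fun t => ∫ u in (0:ℝ)..(2*π), curv x y t u * speed x y t u with hIdef
  -- continuity of I on Icc t₁ t₂
  have hK : IsCompact ((Icc t₁ t₂) ×ˢ (Icc (0:ℝ) (2*π))) := isCompact_Icc.prod isCompact_Icc
  have hsubS : (Icc t₁ t₂) ×ˢ (Icc (0:ℝ) (2*π)) ⊆ J ×ˢ (univ : Set ℝ) :=
    fun p hp => ⟨hIcc hp.1, trivial⟩
  obtain ⟨C, hC⟩ := hK.exists_bound_of_continuousOn (hΦcont.mono hsubS)
  have huIoc : uIoc (0:ℝ) (2*π) = Ioc (0:ℝ) (2*π) := uIoc_of_le (by positivity)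
  have hIcont : ContinuousOn I (Icc t₁ t₂) := by
    intro t₀ ht₀
    apply intervalIntegral.continuousWithinAt_of_dominated_interval
      (bound := fun _ => C)
    · filter_upwards [self_mem_nhdsWithin] with s hs
      exact (cont_u (slice_smooth hsm (hIcc hs)).1 (slice_smooth hsm (hIcc hs)).2
        (himm s (hIcc hs))).aestronglyMeasurable
    · filter_upwards [self_mem_nhdsWithin] with s hs
      refine ae_of_all _ (fun u hu => ?_)
      rw [huIoc] at hu
      have hu' : u ∈ Icc (0:ℝ) (2*π) := ⟨le_of_lt hu.1, hu.2⟩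
      rw [← hΦeq s (hIcc hs) u]
      exact hC (s, u) ⟨hs, hu'⟩
    · exact intervalIntegrable_const
    · refine ae_of_all _ (fun u hu => ?_)
      have hmapsto : MapsTo (fun s : ℝ => ((s, u) : ℝ × ℝ)) (Icc t₁ t₂) (J ×ˢ (univ : Set ℝ)) :=
        fun s hs => ⟨hIcc hs, trivial⟩
      have hcw : ContinuousWithinAt (fun s : ℝ => Φ (s, u)) (Icc t₁ t₂) t₀ := by
        refine (hΦcont.continuousWithinAt ⟨hIcc ht₀, trivial⟩).comp ?_ hmapsto
        exact (continuous_id.prodMk continuous_const).continuousWithinAt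
      exact hcw.congr (fun s hs => (hΦeq s (hIcc hs) u).symm) (hΦeq t₀ (hIcc ht₀) u).symm
  -- integer values
  have hint : ∀ t ∈ Icc t₁ t₂, ∃ n : ℤ, I t = n * (2*π) := fun t ht =>
    integer_turning (slice_smooth hsm (hIcc ht)).1 (slice_smooth hsm (hIcc ht)).2
      (hper t (hIcc ht)).1 (hper t (hIcc ht)).2 (himm t (hIcc ht))
  -- conclude
  by_contra hne2
  have key : ∀ a b : ℝ, a < b → ¬ (Icc a b ⊆ range (fun n : ℤ => (n:ℝ) * (2*π))) := by
    intro a b hab hsub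
    have h0 : volume (Icc a b) = 0 :=
      measure_mono_null hsub ((countable_range _).measure_zero _)
    rw [Real.volume_Icc] at h0
    have := ENNReal.ofReal_eq_zero.mp h0
    linarith
  have himg : I '' (Icc t₁ t₂) ⊆ range (fun n : ℤ => (n:ℝ) * (2*π)) := by
    rintro z ⟨s, hs, rfl⟩
    obtain ⟨n, hn⟩ := hint s hs
    exact ⟨n, hn.symm⟩
  rcases lt_or_gt_of_ne hne2 with hc | hc
  · exact key _ _ hc ((intermediate_value_Icc (le_of_lt hlt) hIcont).trans himg)
  · exact key _ _ hc ((intermediate_value_Icc' (le_of_lt hlt) hIcont).trans himg)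

/-- Under curve shortening flow of a closed immersed curve, the total
turning `∫₀^{2π} κ·√(x_u²+y_u²) du` is constant in `t` (its time derivative is zero). -/
theorem statement2 (J : Set ℝ) (hJinterval : Convex ℝ J) (x y : ℝ → ℝ → ℝ)
    (hcsf : IsCSF J x y) :
    (∀ t ∈ J, HasDerivWithinAt
      (fun s => ∫ u in (0:ℝ)..(2*π), curv x y s u * speed x y s u) 0 J t) ∧
    (∀ t₁ ∈ J, ∀ t₂ ∈ J,
      (∫ u in (0:ℝ)..(2*π), curv x y t₁ u * speed x y t₁ u) =
      (∫ u in (0:ℝ)..(2*π), curv x y t₂ u * speed x y t₂ u)) := by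
  have hconst : ∀ t₁ ∈ J, ∀ t₂ ∈ J,
      (∫ u in (0:ℝ)..(2*π), curv x y t₁ u * speed x y t₁ u) =
      (∫ u in (0:ℝ)..(2*π), curv x y t₂ u * speed x y t₂ u) := by
    intro t₁ h1 t₂ h2
    rcases lt_trichotomy t₁ t₂ with h | h | h
    · exact const_main hJinterval hcsf h1 h2 h
    · rw [h]
    · exact (const_main hJinterval hcsf h2 h1 h).symm
  refine ⟨fun t ht => ?_, hconst⟩
  exact (hasDerivWithinAt_const t J
    (∫ u in (0:ℝ)..(2*π), curv x y t u * speed x y t u)).congr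
    (fun s hs => hconst s hs t ht) rfl
end
end

section
/- Let γ = (x,y) : J × ℝ → ℝ² be a smooth solution of the curve shortening flow, 2π-periodic in u and immersed. Then the signed area A(t) = −∫₀^{2π} y·x_u du satisfies dA/dt = −∫₀^{2π} κ·√(x_u²+y_u²) du for every t ∈ J. In particular, if the total turning ∫₀^{2π} κ·√(x_u²+y_u²) du vanishes for all t, then the signed area A(t) is constant. -/
open Real Set Filter Function intervalIntegral

noncomputable section

section Aux
open MeasureTheory Topology

namespace CSF3
variable {J : Set ℝ} {x : ℝ → ℝ → ℝ} {t : ℝ}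

def SS (J : Set ℝ) : Set (ℝ × ℝ) := J ×ˢ (univ : Set ℝ)
def XX (x : ℝ → ℝ → ℝ) : ℝ × ℝ → ℝ := fun p => x p.1 p.2

lemma mem_SS {u : ℝ} (ht : t ∈ J) : (t, u) ∈ SS J := ⟨ht, mem_univ u⟩

lemma periodic_deriv {f : ℝ → ℝ} {c : ℝ} (h : Function.Periodic f c) :
    Function.Periodic (deriv f) c := by
  intro u
  have hfc : (fun v => f (v + c)) = f := funext h
  calc deriv f (u + c) = deriv (fun v => f (v + c)) u := (deriv_comp_add_const f c u).symm
    _ = deriv f u := by rw [hfc]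

lemma interior_nonempty (hJ : Convex ℝ J) (hns : ¬ J.Subsingleton) :
    (interior J).Nonempty := by
  rw [Set.not_subsingleton_iff] at hns
  obtain ⟨a, ha, b, hb, hab⟩ := hns
  have hsub : Ioo (min a b) (max a b) ⊆ J := by
    intro z hz
    have h1 : z ∈ Icc (min a b) (max a b) := Ioo_subset_Icc_self hz
    rw [Set.Icc_min_max] at h1
    exact hJ.ordConnected.uIcc_subset ha hb h1
  have : Ioo (min a b) (max a b) ⊆ interior J := interior_maximal hsub isOpen_Ioo
  exact (nonempty_Ioo.mpr (by rcases hab.lt_or_gt with h | h <;> simp [h])).mono this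

lemma exists_Icc_mem (hJ : Convex ℝ J) (hns : ¬ J.Subsingleton) (ht : t ∈ J) :
    ∃ a b : ℝ, t ∈ Icc a b ∧ Icc a b ⊆ J ∧ Icc a b ∈ 𝓝[J] t := by
  by_cases h₁ : ∃ b ∈ J, t < b
  · obtain ⟨b, hbJ, htb⟩ := h₁
    by_cases h₂ : ∃ a ∈ J, a < t
    · obtain ⟨a, haJ, hat⟩ := h₂
      refine ⟨a, b, ⟨hat.le, htb.le⟩, hJ.ordConnected.out haJ hbJ, ?_⟩
      exact mem_nhdsWithin_of_mem_nhds
        (mem_of_superset (Ioo_mem_nhds hat htb) Ioo_subset_Icc_self)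
    · push_neg at h₂
      refine ⟨t, b, ⟨le_refl t, htb.le⟩, hJ.ordConnected.out ht hbJ, ?_⟩
      rw [mem_nhdsWithin]
      exact ⟨Iio b, isOpen_Iio, htb, fun s hs => ⟨h₂ s hs.2, le_of_lt hs.1⟩⟩
  · push_neg at h₁
    by_cases h₂ : ∃ a ∈ J, a < t
    · obtain ⟨a, haJ, hat⟩ := h₂
      refine ⟨a, t, ⟨hat.le, le_refl t⟩, hJ.ordConnected.out haJ ht, ?_⟩
      rw [mem_nhdsWithin]
      exact ⟨Ioi a, isOpen_Ioi, hat, fun s hs => ⟨le_of_lt hs.1, h₁ s hs.2⟩⟩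
    · push_neg at h₂
      exact absurd (fun p hp q hq =>
        (le_antisymm (h₁ p hp) (h₂ p hp)).trans (le_antisymm (h₁ q hq) (h₂ q hq)).symm) hns

section helpers
variable {E : Type*} [NormedAddCommGroup E] [NormedSpace ℝ E]

lemma hasDerivAt_sliceU {F : ℝ × ℝ → E} (hF : DifferentiableOn ℝ F (SS J))
    (ht : t ∈ J) (u : ℝ) :
    HasDerivAt (fun v => F (t, v)) (fderivWithin ℝ F (SS J) (t, u) (0, 1)) u := by
  have h1 : HasFDerivWithinAt F (fderivWithin ℝ F (SS J) (t, u)) (SS J) (t, u) :=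
    (hF (t, u) (mem_SS ht)).hasFDerivWithinAt
  have h2 : HasDerivAt (fun v => ((t, v) : ℝ × ℝ)) (((0 : ℝ), (1 : ℝ)) : ℝ × ℝ) u :=
    (hasDerivAt_const u t).prodMk (hasDerivAt_id u)
  have h3 := h1.comp_hasDerivWithinAt u (h2.hasDerivWithinAt (s := univ))
    (fun v _ => mem_SS ht)
  exact hasDerivWithinAt_univ.mp h3

lemma hasDerivWithinAt_sliceT {F : ℝ × ℝ → E} (hF : DifferentiableOn ℝ F (SS J))
    (ht : t ∈ J) (u : ℝ) :
    HasDerivWithinAt (fun s => F (s, u)) (fderivWithin ℝ F (SS J) (t, u) (1, 0)) J t := by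
  have h1 : HasFDerivWithinAt F (fderivWithin ℝ F (SS J) (t, u)) (SS J) (t, u) :=
    (hF (t, u) (mem_SS ht)).hasFDerivWithinAt
  have h2 : HasDerivAt (fun s => ((s, u) : ℝ × ℝ)) (((1 : ℝ), (0 : ℝ)) : ℝ × ℝ) t :=
    (hasDerivAt_id t).prodMk (hasDerivAt_const t u)
  exact h1.comp_hasDerivWithinAt t (h2.hasDerivWithinAt (s := J)) (fun s hs => mem_SS hs)

lemma mixedU {F : ℝ × ℝ → (ℝ × ℝ) →L[ℝ] ℝ} (hF : DifferentiableOn ℝ F (SS J))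
    (ht : t ∈ J) (u : ℝ) (a : ℝ × ℝ) :
    HasDerivAt (fun v => F (t, v) a)
      (fderivWithin ℝ F (SS J) (t, u) (0, 1) a) u := by
  have h := (hasDerivAt_sliceU hF ht u).clm_apply (hasDerivAt_const u a)
  simpa using h

lemma mixedT {F : ℝ × ℝ → (ℝ × ℝ) →L[ℝ] ℝ} (hF : DifferentiableOn ℝ F (SS J))
    (ht : t ∈ J) (u : ℝ) (a : ℝ × ℝ) :
    HasDerivWithinAt (fun s => F (s, u) a)
      (fderivWithin ℝ F (SS J) (t, u) (1, 0) a) J t := by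
  have h := (hasDerivWithinAt_sliceT hF ht u).clm_apply (hasDerivWithinAt_const t J a)
  simpa using h

end helpers

lemma pu_eq (hX : ContDiffOn ℝ (⊤ : ℕ∞) (XX x) (SS J)) (ht : t ∈ J) (u : ℝ) :
    pu x t u = fderivWithin ℝ (XX x) (SS J) (t, u) (0, 1) :=
  (hasDerivAt_sliceU (hX.differentiableOn (by simp)) ht u).deriv

lemma ptW_eq (hX : ContDiffOn ℝ (⊤ : ℕ∞) (XX x) (SS J)) (hUDJ : UniqueDiffOn ℝ J)
    (ht : t ∈ J) (u : ℝ) :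
    ptW J x t u = fderivWithin ℝ (XX x) (SS J) (t, u) (1, 0) :=
  (hasDerivWithinAt_sliceT (hX.differentiableOn (by simp)) ht u).derivWithin (hUDJ t ht)

lemma puu_eq (hX : ContDiffOn ℝ (⊤ : ℕ∞) (XX x) (SS J))
    (hFd : ContDiffOn ℝ (⊤ : ℕ∞) (fderivWithin ℝ (XX x) (SS J)) (SS J)) (ht : t ∈ J) (u : ℝ) :
    puu x t u = fderivWithin ℝ (fderivWithin ℝ (XX x) (SS J)) (SS J) (t, u) (0, 1) (0, 1) := by
  have hd : (fun v => deriv (fun w => x t w) v)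
      = fun v => fderivWithin ℝ (XX x) (SS J) (t, v) (0, 1) :=
    funext fun v => pu_eq hX ht v
  show deriv (fun v => deriv (fun w => x t w) v) u = _
  rw [hd]
  exact (mixedU (hFd.differentiableOn (by simp)) ht u (0, 1)).deriv

lemma symm2 (hX : ContDiffOn ℝ (⊤ : ℕ∞) (XX x) (SS J)) (hUD : UniqueDiffOn ℝ (SS J))
    (htI : t ∈ interior J) (u : ℝ) (v w : ℝ × ℝ) :
    fderivWithin ℝ (fderivWithin ℝ (XX x) (SS J)) (SS J) (t, u) v w
      = fderivWithin ℝ (fderivWithin ℝ (XX x) (SS J)) (SS J) (t, u) w v := by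
  have hO : IsOpen (interior J ×ˢ (univ : Set ℝ)) := isOpen_interior.prod isOpen_univ
  have hpO : (t, u) ∈ interior J ×ˢ (univ : Set ℝ) := ⟨htI, mem_univ u⟩
  have hOS : (interior J ×ˢ (univ : Set ℝ)) ⊆ SS J :=
    prod_mono interior_subset (subset_refl _)
  have hFd : ContDiffOn ℝ (⊤ : ℕ∞) (fderivWithin ℝ (XX x) (SS J)) (SS J) :=
    hX.fderivWithin hUD (by simp)
  have hev : ∀ᶠ q in 𝓝 (t, u), HasFDerivAt (XX x) (fderivWithin ℝ (XX x) (SS J) q) q := by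
    filter_upwards [hO.mem_nhds hpO] with q hq
    exact ((hX.differentiableOn (by simp)) q (hOS hq)).hasFDerivWithinAt.hasFDerivAt
      (mem_of_superset (hO.mem_nhds hq) hOS)
  have h2 : HasFDerivAt (fderivWithin ℝ (XX x) (SS J))
      (fderivWithin ℝ (fderivWithin ℝ (XX x) (SS J)) (SS J) (t, u)) (t, u) :=
    ((hFd.differentiableOn (by simp)) _ (hOS hpO)).hasFDerivWithinAt.hasFDerivAt
      (mem_of_superset (hO.mem_nhds hpO) hOS)
  exact second_derivative_symmetric_of_eventually hev h2 v w

theorem key (J : Set ℝ) (hJ : Convex ℝ J) (hns : ¬ J.Subsingleton)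
    (x y : ℝ → ℝ → ℝ) (hcsf : IsCSF J x y) (t : ℝ) (ht : t ∈ J) :
    HasDerivWithinAt (fun s => -∫ u in (0:ℝ)..(2*π), y s u * pu x s u)
      (-∫ u in (0:ℝ)..(2*π), curv x y t u * speed x y t u) J t := by
  obtain ⟨hsm, hper, himm, heq⟩ := hcsf
  have h2π : (0:ℝ) ≤ 2*π := by positivity
  have hX : ContDiffOn ℝ (⊤ : ℕ∞) (XX x) (SS J) := contDiff_fst.comp_contDiffOn hsm
  have hY : ContDiffOn ℝ (⊤ : ℕ∞) (XX y) (SS J) := contDiff_snd.comp_contDiffOn hsm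
  have hIntNe : (interior J).Nonempty := interior_nonempty hJ hns
  have hUDJ : UniqueDiffOn ℝ J := uniqueDiffOn_convex hJ hIntNe
  have hUD : UniqueDiffOn ℝ (SS J) := hUDJ.prod uniqueDiffOn_univ
  have hFx : ContDiffOn ℝ (⊤ : ℕ∞) (fderivWithin ℝ (XX x) (SS J)) (SS J) := hX.fderivWithin hUD (by simp)
  have hFy : ContDiffOn ℝ (⊤ : ℕ∞) (fderivWithin ℝ (XX y) (SS J)) (SS J) := hY.fderivWithin hUD (by simp)
  have hDFx : ContDiffOn ℝ (⊤ : ℕ∞) (fderivWithin ℝ (fderivWithin ℝ (XX x) (SS J)) (SS J)) (SS J) :=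
    hFx.fderivWithin hUD (by simp)
  have hDFy : ContDiffOn ℝ (⊤ : ℕ∞) (fderivWithin ℝ (fderivWithin ℝ (XX y) (SS J)) (SS J)) (SS J) :=
    hFy.fderivWithin hUD (by simp)
  -- continuity of applied derivatives
  have cFx : ∀ (v : ℝ × ℝ), ContinuousOn (fun p => fderivWithin ℝ (XX x) (SS J) p v) (SS J) :=
    fun v => (ContinuousLinearMap.apply ℝ ℝ v).continuous.comp_continuousOn hFx.continuousOn
  have cFy : ∀ (v : ℝ × ℝ), ContinuousOn (fun p => fderivWithin ℝ (XX y) (SS J) p v) (SS J) :=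
    fun v => (ContinuousLinearMap.apply ℝ ℝ v).continuous.comp_continuousOn hFy.continuousOn
  have cDx : ∀ (v w : ℝ × ℝ), ContinuousOn
      (fun p => fderivWithin ℝ (fderivWithin ℝ (XX x) (SS J)) (SS J) p v w) (SS J) :=
    fun v w => (ContinuousLinearMap.apply ℝ ℝ w).continuous.comp_continuousOn
      ((ContinuousLinearMap.apply ℝ ((ℝ × ℝ) →L[ℝ] ℝ) v).continuous.comp_continuousOn
        hDFx.continuousOn)
  have cDy : ∀ (v w : ℝ × ℝ), ContinuousOn
      (fun p => fderivWithin ℝ (fderivWithin ℝ (XX y) (SS J)) (SS J) p v w) (SS J) :=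
    fun v w => (ContinuousLinearMap.apply ℝ ℝ w).continuous.comp_continuousOn
      ((ContinuousLinearMap.apply ℝ ((ℝ × ℝ) →L[ℝ] ℝ) v).continuous.comp_continuousOn
        hDFy.continuousOn)
  -- pointwise identifications
  have hpux : ∀ s ∈ J, ∀ u, pu x s u = fderivWithin ℝ (XX x) (SS J) (s, u) (0, 1) :=
    fun s hs u => pu_eq hX hs u
  have hpuy : ∀ s ∈ J, ∀ u, pu y s u = fderivWithin ℝ (XX y) (SS J) (s, u) (0, 1) :=
    fun s hs u => pu_eq hY hs u
  have hptx : ∀ s ∈ J, ∀ u, ptW J x s u = fderivWithin ℝ (XX x) (SS J) (s, u) (1, 0) :=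
    fun s hs u => ptW_eq hX hUDJ hs u
  have hpty : ∀ s ∈ J, ∀ u, ptW J y s u = fderivWithin ℝ (XX y) (SS J) (s, u) (1, 0) :=
    fun s hs u => ptW_eq hY hUDJ hs u
  -- slice continuity helpers
  have csliceT : ∀ {g : ℝ × ℝ → ℝ}, ContinuousOn g (SS J) → ∀ u : ℝ,
      ContinuousOn (fun r => g (r, u)) J := fun {g} hg u =>
    hg.comp ((continuous_id.prodMk continuous_const).continuousOn)
      (fun r hr => mem_SS hr)
  have csliceU : ∀ {g : ℝ × ℝ → ℝ}, ContinuousOn g (SS J) → ∀ {s : ℝ}, s ∈ J →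
      Continuous (fun u => g (s, u)) := by
    intro g hg s hs
    rw [← continuousOn_univ]
    exact hg.comp ((continuous_const.prodMk continuous_id).continuousOn)
      (fun u _ => mem_SS hs)
  -- the two main integrands
  set G : ℝ × ℝ → ℝ := fun p => fderivWithin ℝ (XX y) (SS J) p (1, 0) *
      fderivWithin ℝ (XX x) (SS J) p (0, 1) +
      XX y p * (fderivWithin ℝ (fderivWithin ℝ (XX x) (SS J)) (SS J) p (1, 0) (0, 1)) with hGdef
  set Hc : ℝ × ℝ → ℝ := fun p =>
      (fderivWithin ℝ (XX x) (SS J) p (0, 1) *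
          fderivWithin ℝ (fderivWithin ℝ (XX y) (SS J)) (SS J) p (0, 1) (0, 1) -
        fderivWithin ℝ (XX y) (SS J) p (0, 1) *
          fderivWithin ℝ (fderivWithin ℝ (XX x) (SS J)) (SS J) p (0, 1) (0, 1)) /
        ((fderivWithin ℝ (XX x) (SS J) p (0, 1))^2 +
          (fderivWithin ℝ (XX y) (SS J) p (0, 1))^2) with hHcdef
  have hGc : ContinuousOn G (SS J) :=
    ((cFy (1, 0)).mul (cFx (0, 1))).add (hY.continuousOn.mul (cDx (1, 0) (0, 1)))
  have hden : ∀ p ∈ SS J, ((fderivWithin ℝ (XX x) (SS J) p (0, 1))^2 +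
      (fderivWithin ℝ (XX y) (SS J) p (0, 1))^2) ≠ 0 := by
    rintro ⟨s, u⟩ ⟨hs, -⟩
    have h := himm s hs u
    rw [hpux s hs u, hpuy s hs u] at h
    exact ne_of_gt h
  have hHcc : ContinuousOn Hc (SS J) :=
    (((cFx (0, 1)).mul (cDy (0, 1) (0, 1))).sub ((cFy (0, 1)).mul (cDx (0, 1) (0, 1)))).div
      (((cFx (0, 1)).pow 2).add ((cFy (0, 1)).pow 2)) hden
  -- Hc equals curv * speed on J
  have hHceq : ∀ s ∈ J, ∀ u, Hc (s, u) = curv x y s u * speed x y s u := by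
    intro s hs u
    have hB : (0:ℝ) < (pu x s u)^2 + (pu y s u)^2 := himm s hs u
    have h12 : ((pu x s u)^2 + (pu y s u)^2) ^ ((1:ℝ)/2) ≠ 0 :=
      (Real.rpow_pos_of_pos hB _).ne'
    have h32 : ((pu x s u)^2 + (pu y s u)^2) ^ ((3:ℝ)/2)
        = ((pu x s u)^2 + (pu y s u)^2) ^ ((1:ℝ)/2) * ((pu x s u)^2 + (pu y s u)^2) := by
      rw [show (3:ℝ)/2 = 1/2 + 1 by norm_num, Real.rpow_add hB, Real.rpow_one]
    simp only [hHcdef]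
    rw [← hpux s hs u, ← hpuy s hs u, ← puu_eq hX hFx hs u, ← puu_eq hY hFy hs u,
      curv, speed, Real.sqrt_eq_rpow, h32]
    field_simp
  -- time derivative of the integrand
  have hGderiv : ∀ s ∈ J, ∀ u, HasDerivWithinAt (fun r => y r u * pu x r u) (G (s, u)) J s := by
    intro s hs u
    have h1 : HasDerivWithinAt (fun r => y r u) (fderivWithin ℝ (XX y) (SS J) (s, u) (1, 0)) J s :=
      hasDerivWithinAt_sliceT (hY.differentiableOn (by simp)) hs u
    have h2 : HasDerivWithinAt (fun r => fderivWithin ℝ (XX x) (SS J) (r, u) (0, 1))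
        (fderivWithin ℝ (fderivWithin ℝ (XX x) (SS J)) (SS J) (s, u) (1, 0) (0, 1)) J s :=
      mixedT (hFx.differentiableOn (by simp)) hs u (0, 1)
    have h2' : HasDerivWithinAt (fun r => pu x r u)
        (fderivWithin ℝ (fderivWithin ℝ (XX x) (SS J)) (SS J) (s, u) (1, 0) (0, 1)) J s :=
      h2.congr (fun r hr => hpux r hr u) (hpux s hs u)
    have h3 := h1.mul h2'
    rw [hGdef]
    simp only []
    rw [← hpux s hs u]
    exact h3
  -- interval inside interior
  have hIooInt : ∀ {τ₁ τ₂ : ℝ}, τ₁ ∈ J → τ₂ ∈ J → Ioo τ₁ τ₂ ⊆ interior J := by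
    intro τ₁ τ₂ h₁ h₂
    rcases le_total τ₁ τ₂ with h | h
    · exact interior_maximal (Ioo_subset_Icc_self.trans (hJ.ordConnected.out h₁ h₂)) isOpen_Ioo
    · rw [Ioo_eq_empty_of_le h]; exact empty_subset _
  -- A-difference via Fubini and FTC
  have hAdiff : ∀ τ₁ ∈ J, ∀ τ₂ ∈ J, τ₁ ≤ τ₂ →
      (-∫ u in (0:ℝ)..(2*π), y τ₂ u * pu x τ₂ u) - (-∫ u in (0:ℝ)..(2*π), y τ₁ u * pu x τ₁ u)
        = -∫ s in τ₁..τ₂, (∫ u in (0:ℝ)..(2*π), G (s, u)) := by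
    intro τ₁ h₁ τ₂ h₂ h12
    have hsubJ : Icc τ₁ τ₂ ⊆ J := hJ.ordConnected.out h₁ h₂
    have hFTC : ∀ u : ℝ, (∫ s in τ₁..τ₂, G (s, u))
        = y τ₂ u * pu x τ₂ u - y τ₁ u * pu x τ₁ u := by
      intro u
      have hcont : ContinuousOn (fun r => y r u * pu x r u) (Icc τ₁ τ₂) := by
        apply ContinuousOn.congr (((csliceT hY.continuousOn u).mono hsubJ).mul
          ((csliceT (cFx (0, 1)) u).mono hsubJ))
        intro r hr
        show y r u * pu x r u = XX y (r, u) * fderivWithin ℝ (XX x) (SS J) (r, u) (0, 1)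
        rw [hpux r (hsubJ hr) u]
        exact rfl
      have hderiv : ∀ s ∈ Ioo τ₁ τ₂,
          HasDerivWithinAt (fun r => y r u * pu x r u) (G (s, u)) (Ioi s) s := by
        intro s hso
        have hsJ : s ∈ J := hsubJ (Ioo_subset_Icc_self hso)
        have hnb : J ∈ 𝓝 s := mem_interior_iff_mem_nhds.mp (hIooInt h₁ h₂ hso)
        exact ((hGderiv s hsJ u).hasDerivAt hnb).hasDerivWithinAt
      have hint : IntervalIntegrable (fun s => G (s, u)) volume τ₁ τ₂ := by
        apply ContinuousOn.intervalIntegrable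
        exact (csliceT hGc u).mono (by rwa [uIcc_of_le h12])
      exact intervalIntegral.integral_eq_sub_of_hasDeriv_right_of_le h12 hcont hderiv hint
    have hGrect : ContinuousOn G (Icc τ₁ τ₂ ×ˢ Icc 0 (2*π)) :=
      hGc.mono (prod_mono hsubJ (subset_univ _))
    have hInt : IntegrableOn G (Ioc τ₁ τ₂ ×ˢ Ioc 0 (2*π)) volume :=
      (hGrect.integrableOn_compact (isCompact_Icc.prod isCompact_Icc)).mono_set
        (prod_mono Ioc_subset_Icc_self Ioc_subset_Icc_self)
    have hswap : (∫ s in τ₁..τ₂, (∫ u in (0:ℝ)..(2*π), G (s, u)))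
        = ∫ u in (0:ℝ)..(2*π), ∫ s in τ₁..τ₂, G (s, u) := by
      simp only [intervalIntegral.integral_of_le h12, intervalIntegral.integral_of_le h2π]
      apply MeasureTheory.integral_integral_swap
      rw [Measure.prod_restrict, ← Measure.volume_eq_prod]
      exact hInt
    have hycont : ∀ {τ : ℝ}, τ ∈ J → Continuous (fun u => y τ u) :=
      fun {τ} hτ => csliceU hY.continuousOn hτ
    have hxucont : ∀ {τ : ℝ}, τ ∈ J → Continuous (fun u => pu x τ u) := by
      intro τ hτ
      have h := csliceU (cFx (0, 1)) hτ
      have he : (fun u => pu x τ u) = fun u => fderivWithin ℝ (XX x) (SS J) (τ, u) (0, 1) :=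
        funext fun u => hpux τ hτ u
      rw [he]; exact h
    have hi : ∀ {τ : ℝ}, τ ∈ J → IntervalIntegrable (fun u => y τ u * pu x τ u) volume 0 (2*π) :=
      fun {τ} hτ => ((hycont hτ).mul (hxucont hτ)).intervalIntegrable 0 (2*π)
    calc (-∫ u in (0:ℝ)..(2*π), y τ₂ u * pu x τ₂ u) - (-∫ u in (0:ℝ)..(2*π), y τ₁ u * pu x τ₁ u)
        = -((∫ u in (0:ℝ)..(2*π), y τ₂ u * pu x τ₂ u)
            - ∫ u in (0:ℝ)..(2*π), y τ₁ u * pu x τ₁ u) := by ring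
      _ = -∫ u in (0:ℝ)..(2*π), (y τ₂ u * pu x τ₂ u - y τ₁ u * pu x τ₁ u) := by
          rw [intervalIntegral.integral_sub (hi h₂) (hi h₁)]
      _ = -∫ u in (0:ℝ)..(2*π), ∫ s in τ₁..τ₂, G (s, u) := by
          congr 1
          exact intervalIntegral.integral_congr (fun u _ => (hFTC u).symm)
      _ = -∫ s in τ₁..τ₂, (∫ u in (0:ℝ)..(2*π), G (s, u)) := by rw [hswap]
  -- Φ = T' on interior J
  have hPhiT : ∀ s ∈ interior J,
      (∫ u in (0:ℝ)..(2*π), G (s, u)) = ∫ u in (0:ℝ)..(2*π), Hc (s, u) := by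
    intro s hsI
    have hs : s ∈ J := interior_subset hsI
    have hxs : ContDiff ℝ (⊤ : ℕ∞) (fun v => x s v) := by
      rw [← contDiffOn_univ]
      exact hX.comp ((contDiff_const.prodMk contDiff_id).contDiffOn) (fun v _ => mem_SS hs)
    have hys : ContDiff ℝ (⊤ : ℕ∞) (fun v => y s v) := by
      rw [← contDiffOn_univ]
      exact hY.comp ((contDiff_const.prodMk contDiff_id).contDiffOn) (fun v _ => mem_SS hs)
    have hpxper : Function.Periodic (deriv (fun v => x s v)) (2*π) := periodic_deriv (hper s hs).1
    have hpyper : Function.Periodic (deriv (fun v => y s v)) (2*π) := periodic_deriv (hper s hs).2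
    have hpxxper : Function.Periodic (fun u => deriv (fun v => deriv (fun w => x s w) v) u) (2*π) :=
      periodic_deriv hpxper
    have hpyyper : Function.Periodic (fun u => deriv (fun v => deriv (fun w => y s w) v) u) (2*π) :=
      periodic_deriv hpyper
    have hptper : ptW J x s (2*π) = ptW J x s 0 := by
      rw [(heq s hs (2*π)).1, (heq s hs 0).1]
      have e1 := hpxper 0
      have e2 := hpyper 0
      have e3 := hpxxper 0
      have e4 := hpyyper 0
      simp only [zero_add] at e1 e2 e3 e4
      simp only [curv, speed, pu, puu]
      rw [e1, e2, e3, e4]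
    have hwder : ∀ v ∈ uIcc (0:ℝ) (2*π),
        HasDerivAt (fun w => fderivWithin ℝ (XX x) (SS J) (s, w) (1, 0))
          (fderivWithin ℝ (fderivWithin ℝ (XX x) (SS J)) (SS J) (s, v) (0, 1) (1, 0)) v :=
      fun v _ => mixedU (hFx.differentiableOn (by simp)) hs v (1, 0)
    have hyder : ∀ v ∈ uIcc (0:ℝ) (2*π), HasDerivAt (fun w => y s w) (pu y s v) v :=
      fun v _ => ((hys.differentiable (by simp)).differentiableAt).hasDerivAt
    have hpuyint : IntervalIntegrable (fun v => pu y s v) volume 0 (2*π) :=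
      (hys.continuous_deriv (by simp)).intervalIntegrable 0 (2*π)
    have hDint : IntervalIntegrable
        (fun v => fderivWithin ℝ (fderivWithin ℝ (XX x) (SS J)) (SS J) (s, v) (0, 1) (1, 0))
        volume 0 (2*π) :=
      (csliceU (cDx (0, 1) (1, 0)) hs).intervalIntegrable 0 (2*π)
    have hb1 : y s (2*π) = y s 0 := by
      have := (hper s hs).2 0; simpa using this
    have hb2 : fderivWithin ℝ (XX x) (SS J) (s, 2*π) (1, 0)
        = fderivWithin ℝ (XX x) (SS J) (s, 0) (1, 0) := by
      rw [← hptx s hs (2*π), ← hptx s hs 0]; exact hptper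
    have hIBP : (∫ u in (0:ℝ)..(2*π),
          y s u * fderivWithin ℝ (fderivWithin ℝ (XX x) (SS J)) (SS J) (s, u) (0, 1) (1, 0))
        = -∫ u in (0:ℝ)..(2*π), pu y s u * fderivWithin ℝ (XX x) (SS J) (s, u) (1, 0) := by
      have h := intervalIntegral.integral_mul_deriv_eq_deriv_mul hyder hwder hpuyint hDint
      rw [hb1, hb2] at h
      rw [h]; ring
    have hsymm : ∀ u : ℝ,
        fderivWithin ℝ (fderivWithin ℝ (XX x) (SS J)) (SS J) (s, u) (1, 0) (0, 1)
          = fderivWithin ℝ (fderivWithin ℝ (XX x) (SS J)) (SS J) (s, u) (0, 1) (1, 0) :=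
      fun u => symm2 hX hUD hsI u (1, 0) (0, 1)
    have hi1 : IntervalIntegrable (fun u => fderivWithin ℝ (XX y) (SS J) (s, u) (1, 0) *
        fderivWithin ℝ (XX x) (SS J) (s, u) (0, 1)) volume 0 (2*π) :=
      ((csliceU (cFy (1, 0)) hs).mul (csliceU (cFx (0, 1)) hs)).intervalIntegrable 0 (2*π)
    have hi2 : IntervalIntegrable (fun u => y s u *
        fderivWithin ℝ (fderivWithin ℝ (XX x) (SS J)) (SS J) (s, u) (0, 1) (1, 0)) volume 0 (2*π) :=
      ((hys.continuous).mul (csliceU (cDx (0, 1) (1, 0)) hs)).intervalIntegrable 0 (2*π)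
    have hi3 : IntervalIntegrable (fun u => pu y s u *
        fderivWithin ℝ (XX x) (SS J) (s, u) (1, 0)) volume 0 (2*π) :=
      ((hys.continuous_deriv (by simp)).mul (csliceU (cFx (1, 0)) hs)).intervalIntegrable 0 (2*π)
    calc (∫ u in (0:ℝ)..(2*π), G (s, u))
        = ∫ u in (0:ℝ)..(2*π), (fderivWithin ℝ (XX y) (SS J) (s, u) (1, 0) *
              fderivWithin ℝ (XX x) (SS J) (s, u) (0, 1)
            + y s u * fderivWithin ℝ (fderivWithin ℝ (XX x) (SS J)) (SS J) (s, u) (0, 1) (1, 0)) := by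
          apply intervalIntegral.integral_congr
          intro u _
          show G (s, u) = _
          simp only [hGdef]
          rw [hsymm u]
          exact rfl
      _ = (∫ u in (0:ℝ)..(2*π), fderivWithin ℝ (XX y) (SS J) (s, u) (1, 0) *
              fderivWithin ℝ (XX x) (SS J) (s, u) (0, 1))
            + ∫ u in (0:ℝ)..(2*π), y s u *
              fderivWithin ℝ (fderivWithin ℝ (XX x) (SS J)) (SS J) (s, u) (0, 1) (1, 0) :=
          intervalIntegral.integral_add hi1 hi2
      _ = (∫ u in (0:ℝ)..(2*π), fderivWithin ℝ (XX y) (SS J) (s, u) (1, 0) *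
              fderivWithin ℝ (XX x) (SS J) (s, u) (0, 1))
            - ∫ u in (0:ℝ)..(2*π), pu y s u * fderivWithin ℝ (XX x) (SS J) (s, u) (1, 0) := by
          rw [hIBP]; ring
      _ = ∫ u in (0:ℝ)..(2*π), (fderivWithin ℝ (XX y) (SS J) (s, u) (1, 0) *
              fderivWithin ℝ (XX x) (SS J) (s, u) (0, 1)
            - pu y s u * fderivWithin ℝ (XX x) (SS J) (s, u) (1, 0)) :=
          (intervalIntegral.integral_sub hi1 hi3).symm
      _ = ∫ u in (0:ℝ)..(2*π), Hc (s, u) := by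
          apply intervalIntegral.integral_congr
          intro u _
          show fderivWithin ℝ (XX y) (SS J) (s, u) (1, 0) *
              fderivWithin ℝ (XX x) (SS J) (s, u) (0, 1)
            - pu y s u * fderivWithin ℝ (XX x) (SS J) (s, u) (1, 0) = Hc (s, u)
          have e1 : fderivWithin ℝ (XX y) (SS J) (s, u) (1, 0)
              = curv x y s u * pu x s u / speed x y s u := by
            rw [← hpty s hs u]; exact (heq s hs u).2
          have e2 : fderivWithin ℝ (XX x) (SS J) (s, u) (1, 0)
              = -(curv x y s u) * pu y s u / speed x y s u := by
            rw [← hptx s hs u]; exact (heq s hs u).1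
          have e3 : fderivWithin ℝ (XX x) (SS J) (s, u) (0, 1) = pu x s u := (hpux s hs u).symm
          rw [e1, e2, e3, hHceq s hs u]
          have hB := himm s hs u
          have hsp : (0:ℝ) < speed x y s u := Real.sqrt_pos.mpr hB
          have hsp2 : speed x y s u ^ 2 = (pu x s u)^2 + (pu y s u)^2 := Real.sq_sqrt hB.le
          field_simp
          linear_combination (-(curv x y s u)) * hsp2
  -- continuity of T'
  have hT'c : ContinuousOn (fun s => ∫ u in (0:ℝ)..(2*π), Hc (s, u)) J := by
    intro t₀ ht₀
    obtain ⟨a, b, htab, hIccJ, hIccmem⟩ := exists_Icc_mem hJ hns ht₀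
    obtain ⟨C, hC⟩ := ((isCompact_Icc (a := a) (b := b)).prod
        (isCompact_Icc (a := (0:ℝ)) (b := 2*π))).exists_bound_of_continuousOn
      (hHcc.mono (prod_mono hIccJ (subset_univ _)))
    apply intervalIntegral.continuousWithinAt_of_dominated_interval (bound := fun _ => C)
    · filter_upwards [self_mem_nhdsWithin] with s hs
      exact (csliceU hHcc hs).aestronglyMeasurable
    · filter_upwards [hIccmem] with s hs
      refine MeasureTheory.ae_of_all _ (fun u hu => ?_)
      have hu' : u ∈ Icc (0:ℝ) (2*π) := Ioc_subset_Icc_self (by rwa [Set.uIoc_of_le h2π] at hu)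
      exact hC (s, u) ⟨hs, hu'⟩
    · exact intervalIntegrable_const
    · exact MeasureTheory.ae_of_all _ (fun u _ => (csliceT hHcc u) t₀ ht₀)
  -- representation of A
  have hAdiffT' : ∀ τ₁ ∈ J, ∀ τ₂ ∈ J, τ₁ ≤ τ₂ →
      (-∫ u in (0:ℝ)..(2*π), y τ₂ u * pu x τ₂ u) - (-∫ u in (0:ℝ)..(2*π), y τ₁ u * pu x τ₁ u)
        = -∫ s in τ₁..τ₂, (∫ u in (0:ℝ)..(2*π), Hc (s, u)) := by
    intro τ₁ h₁ τ₂ h₂ h12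
    rw [hAdiff τ₁ h₁ τ₂ h₂ h12]
    congr 1
    apply intervalIntegral.integral_congr_ae
    have hne2 : ∀ᵐ σ : ℝ, σ ≠ τ₂ := by
      have h0 : (volume : Measure ℝ) {τ₂} = 0 := Real.volume_singleton
      exact MeasureTheory.ae_iff.mpr (by simpa using h0)
    filter_upwards [hne2] with σ hσ hmem
    rw [Set.uIoc_of_le h12] at hmem
    exact hPhiT σ (hIooInt h₁ h₂ ⟨hmem.1, lt_of_le_of_ne hmem.2 hσ⟩)
  have hArep : ∀ s ∈ J, (-∫ u in (0:ℝ)..(2*π), y s u * pu x s u)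
      = (-∫ u in (0:ℝ)..(2*π), y t u * pu x t u)
        - ∫ σ in t..s, (∫ u in (0:ℝ)..(2*π), Hc (σ, u)) := by
    intro s hs
    rcases le_total t s with h | h
    · have := hAdiffT' t ht s hs h
      linarith [this]
    · have h' := hAdiffT' s hs t ht h
      have hsy : (∫ σ in t..s, (∫ u in (0:ℝ)..(2*π), Hc (σ, u)))
          = -∫ σ in s..t, (∫ u in (0:ℝ)..(2*π), Hc (σ, u)) :=
        intervalIntegral.integral_symm s t
      linarith [h', hsy]
  -- conclusion
  obtain ⟨a, b, htab, hIccJ, hIccmem⟩ := exists_Icc_mem hJ hns ht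
  haveI : Fact (t ∈ Icc a b) := ⟨htab⟩
  have hint_tt : IntervalIntegrable (fun s => ∫ u in (0:ℝ)..(2*π), Hc (s, u)) volume t t :=
    IntervalIntegrable.refl
  have hmeasF : StronglyMeasurableAtFilter (fun s => ∫ u in (0:ℝ)..(2*π), Hc (s, u))
      (𝓝[Icc a b] t) volume :=
    ⟨Icc a b, self_mem_nhdsWithin, (hT'c.mono hIccJ).aestronglyMeasurable measurableSet_Icc⟩
  have hFTC1 : HasDerivWithinAt (fun s => ∫ σ in t..s, (∫ u in (0:ℝ)..(2*π), Hc (σ, u)))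
      ((fun s => ∫ u in (0:ℝ)..(2*π), Hc (s, u)) t) (Icc a b) t :=
    intervalIntegral.integral_hasDerivWithinAt_right hint_tt hmeasF ((hT'c t ht).mono hIccJ)
  have hFTC1' : HasDerivWithinAt (fun s => ∫ σ in t..s, (∫ u in (0:ℝ)..(2*π), Hc (σ, u)))
      (∫ u in (0:ℝ)..(2*π), Hc (t, u)) J t := hFTC1.mono_of_mem_nhdsWithin hIccmem
  have hfinal : HasDerivWithinAt (fun s => -∫ u in (0:ℝ)..(2*π), y s u * pu x s u)
      (-(∫ u in (0:ℝ)..(2*π), Hc (t, u))) J t := by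
    refine (hFTC1'.const_sub (-∫ u in (0:ℝ)..(2*π), y t u * pu x t u)).congr
      (fun s hs => hArep s hs) ?_
    simp [intervalIntegral.integral_same]
  have hTeq : (∫ u in (0:ℝ)..(2*π), Hc (t, u)) = ∫ u in (0:ℝ)..(2*π), curv x y t u * speed x y t u :=
    intervalIntegral.integral_congr (fun u _ => hHceq t ht u)
  rw [← hTeq]
  exact hfinal

end CSF3

end Aux

open CSF3 MeasureTheory Topology in
/-- Under curve shortening flow, the signed area `A(t) = −∫₀^{2π} y·x_u du`
satisfies `dA/dt = −∫₀^{2π} κ·√(x_u²+y_u²) du`; in particular if the total turning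
vanishes for all `t`, the signed area is constant. -/
theorem statement3 (J : Set ℝ) (hJinterval : Convex ℝ J) (x y : ℝ → ℝ → ℝ)
    (hcsf : IsCSF J x y) :
    (∀ t ∈ J, HasDerivWithinAt
      (fun s => -∫ u in (0:ℝ)..(2*π), y s u * pu x s u)
      (-∫ u in (0:ℝ)..(2*π), curv x y t u * speed x y t u) J t) ∧
    ((∀ t ∈ J, (∫ u in (0:ℝ)..(2*π), curv x y t u * speed x y t u) = 0) →
      ∀ t₁ ∈ J, ∀ t₂ ∈ J,
        (-∫ u in (0:ℝ)..(2*π), y t₁ u * pu x t₁ u) =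
        (-∫ u in (0:ℝ)..(2*π), y t₂ u * pu x t₂ u)) := by
  by_cases hns : J.Subsingleton
  · constructor
    · intro t ht
      rw [hasDerivWithinAt_iff_tendsto_slope]
      have hempty : J \ {t} = ∅ := by
        apply eq_empty_of_subset_empty
        rintro s ⟨hsJ, hst⟩
        exact hst (hns hsJ ht)
      rw [hempty]
      simp
    · intro _ t₁ h₁ t₂ h₂
      rw [hns h₁ h₂]
  · refine ⟨fun t ht => key J hJinterval hns x y hcsf t ht, ?_⟩
    intro hvan t₁ h₁ t₂ h₂
    have h0 : ∀ s ∈ J, HasDerivWithinAt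
        (fun s => -∫ u in (0:ℝ)..(2*π), y s u * pu x s u) ((fun _ => (0:ℝ)) s) J s := by
      intro s hs
      have h := key J hJinterval hns x y hcsf s hs
      rw [hvan s hs, neg_zero] at h
      exact h
    have hb := Convex.norm_image_sub_le_of_norm_hasDerivWithin_le (C := 0) h0
      (fun s _ => by simp) hJinterval h₁ h₂
    have h1 : ‖(-∫ u in (0:ℝ)..(2*π), y t₂ u * pu x t₂ u)
        - (-∫ u in (0:ℝ)..(2*π), y t₁ u * pu x t₁ u)‖ ≤ 0 := by simpa using hb
    exact (sub_eq_zero.mp (norm_le_zero_iff.mp h1)).symm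
end
end

section
/- Let ε > 0 and let x, y, f : (−ε,ε) × ℝ → ℝ be smooth functions, 2π-periodic in u, with x_u² + y_u² > 0, satisfying x_t = −f_u·y_u/(x_u²+y_u²) and y_t = f_u·x_u/(x_u²+y_u²). Then the length L(t) = ∫₀^{2π} √(x_u²+y_u²) du satisfies dL/dt = −∫₀^{2π} κ·f_u du, where κ = (x_u·y_uu − y_u·x_uu)/(x_u²+y_u²)^{3/2} is the curvature. -/
open Real Set Filter Function intervalIntegral

noncomputable section

/-- Derivative of a slice in the second variable. -/
theorem my_slice2 {X : ℝ × ℝ → ℝ} {S : Set (ℝ × ℝ)} (hX : ContDiffOn ℝ (⊤ : ℕ∞) X S) (hS : IsOpen S)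
    {t u : ℝ} (hp : (t, u) ∈ S) :
    HasDerivAt (fun v => X (t, v)) (fderiv ℝ X (t, u) (0, 1)) u := by
  have h := ((hX.contDiffAt (hS.mem_nhds hp)).differentiableAt (by simp)).hasFDerivAt
  have hline : HasDerivAt (fun v : ℝ => ((t, v) : ℝ × ℝ)) ((0 : ℝ), (1 : ℝ)) u :=
    (hasDerivAt_const u t).prodMk (hasDerivAt_id u)
  exact h.comp_hasDerivAt u hline

/-- Derivative of a slice in the first variable. -/
theorem my_slice1 {X : ℝ × ℝ → ℝ} {S : Set (ℝ × ℝ)} (hX : ContDiffOn ℝ (⊤ : ℕ∞) X S) (hS : IsOpen S)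
    {t u : ℝ} (hp : (t, u) ∈ S) :
    HasDerivAt (fun s => X (s, u)) (fderiv ℝ X (t, u) (1, 0)) t := by
  have h := ((hX.contDiffAt (hS.mem_nhds hp)).differentiableAt (by simp)).hasFDerivAt
  have hline : HasDerivAt (fun s : ℝ => ((s, u) : ℝ × ℝ)) ((1 : ℝ), (0 : ℝ)) t :=
    (hasDerivAt_id t).prodMk (hasDerivAt_const t u)
  exact h.comp_hasDerivAt t hline

/-- The map `q ↦ fderiv ℝ X q w` is smooth on an open set. -/
theorem my_fderiv_apply_smooth {X : ℝ × ℝ → ℝ} {S : Set (ℝ × ℝ)} (hX : ContDiffOn ℝ (⊤ : ℕ∞) X S)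
    (hS : IsOpen S) (w : ℝ × ℝ) :
    ContDiffOn ℝ (⊤ : ℕ∞) (fun q => fderiv ℝ X q w) S :=
  (hX.fderiv_of_isOpen hS (by simp)).clm_apply contDiffOn_const

/-- Clairaut / Schwarz symmetry on an open set. -/
theorem my_clairaut {X : ℝ × ℝ → ℝ} {S : Set (ℝ × ℝ)} (hX : ContDiffOn ℝ (⊤ : ℕ∞) X S) (hS : IsOpen S)
    {p : ℝ × ℝ} (hp : p ∈ S) (v w : ℝ × ℝ) :
    fderiv ℝ (fun q => fderiv ℝ X q v) p w = fderiv ℝ (fun q => fderiv ℝ X q w) p v := by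
  have hfd : ContDiffOn ℝ (⊤ : ℕ∞) (fderiv ℝ X) S := hX.fderiv_of_isOpen hS (by simp)
  have hD : HasFDerivAt (fderiv ℝ X) (fderiv ℝ (fderiv ℝ X) p) p :=
    ((hfd.contDiffAt (hS.mem_nhds hp)).differentiableAt (by simp)).hasFDerivAt
  have happ : ∀ a : ℝ × ℝ, fderiv ℝ (fun q => fderiv ℝ X q a) p
      = (fderiv ℝ (fderiv ℝ X) p).flip a := by
    intro a
    have h := hD.clm_apply (hasFDerivAt_const a p)
    rw [h.fderiv]
    refine ContinuousLinearMap.ext fun z => ?_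
    simp
  have hsym : ∀ a b : ℝ × ℝ, fderiv ℝ (fderiv ℝ X) p a b = fderiv ℝ (fderiv ℝ X) p b a := by
    intro a b
    refine second_derivative_symmetric_of_eventually (f := X) ?_ hD a b
    filter_upwards [hS.mem_nhds hp] with q hq
    exact ((hX.contDiffAt (hS.mem_nhds hq)).differentiableAt (by simp)).hasFDerivAt
  rw [happ v, happ w]
  simp only [ContinuousLinearMap.flip_apply]
  exact hsym w v

/-- `pu` equals the full derivative applied to `(0,1)`. -/
theorem my_pu_eq {x : ℝ → ℝ → ℝ} {S : Set (ℝ × ℝ)}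
    (hX : ContDiffOn ℝ (⊤ : ℕ∞) (fun p : ℝ × ℝ => x p.1 p.2) S) (hS : IsOpen S)
    {t u : ℝ} (hp : (t, u) ∈ S) :
    pu x t u = fderiv ℝ (fun p : ℝ × ℝ => x p.1 p.2) (t, u) (0, 1) :=
  (my_slice2 hX hS hp).deriv

/-- spatial derivative of `pu` in the space variable. -/
theorem my_pu_hasDerivAt_space {x : ℝ → ℝ → ℝ} {S : Set (ℝ × ℝ)}
    (hX : ContDiffOn ℝ (⊤ : ℕ∞) (fun p : ℝ × ℝ => x p.1 p.2) S) (hS : IsOpen S)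
    {t u : ℝ} (hp : (t, u) ∈ S) (hall : ∀ v : ℝ, (t, v) ∈ S) :
    HasDerivAt (fun v => pu x t v)
      (fderiv ℝ (fun q => fderiv ℝ (fun p : ℝ × ℝ => x p.1 p.2) q (0, 1)) (t, u) (0, 1)) u := by
  have h := my_slice2 (my_fderiv_apply_smooth hX hS (0, 1)) hS hp
  exact h.congr_of_eventuallyEq
    (Eventually.of_forall fun v => my_pu_eq hX hS (hall v))

/-- `puu` value. -/
theorem my_puu_eq {x : ℝ → ℝ → ℝ} {S : Set (ℝ × ℝ)}
    (hX : ContDiffOn ℝ (⊤ : ℕ∞) (fun p : ℝ × ℝ => x p.1 p.2) S) (hS : IsOpen S)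
    {t u : ℝ} (hp : (t, u) ∈ S) (hall : ∀ v : ℝ, (t, v) ∈ S) :
    puu x t u
      = fderiv ℝ (fun q => fderiv ℝ (fun p : ℝ × ℝ => x p.1 p.2) q (0, 1)) (t, u) (0, 1) :=
  (my_pu_hasDerivAt_space hX hS hp hall).deriv

/-- time derivative of `pu`, via Clairaut. -/
theorem my_pu_hasDerivAt_time {x : ℝ → ℝ → ℝ} {S : Set (ℝ × ℝ)}
    (hX : ContDiffOn ℝ (⊤ : ℕ∞) (fun p : ℝ × ℝ => x p.1 p.2) S) (hS : IsOpen S)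
    {t u : ℝ} (hp : (t, u) ∈ S) (hev : ∀ᶠ s in nhds t, (s, u) ∈ S) :
    HasDerivAt (fun s => pu x s u)
      (fderiv ℝ (fun q => fderiv ℝ (fun p : ℝ × ℝ => x p.1 p.2) q (1, 0)) (t, u) (0, 1)) t := by
  have h := my_slice1 (my_fderiv_apply_smooth hX hS (0, 1)) hS hp
  rw [my_clairaut hX hS hp (0, 1) (1, 0)] at h
  refine h.congr_of_eventuallyEq ?_
  filter_upwards [hev] with s hs
  exact my_pu_eq hX hS hs

/-- space derivative of the time derivative. -/
theorem my_pt_hasDerivAt_space {x : ℝ → ℝ → ℝ} {S : Set (ℝ × ℝ)}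
    (hX : ContDiffOn ℝ (⊤ : ℕ∞) (fun p : ℝ × ℝ => x p.1 p.2) S) (hS : IsOpen S)
    {t u : ℝ} (hp : (t, u) ∈ S) (hall : ∀ v : ℝ, (t, v) ∈ S) :
    HasDerivAt (fun v => deriv (fun s => x s v) t)
      (fderiv ℝ (fun q => fderiv ℝ (fun p : ℝ × ℝ => x p.1 p.2) q (1, 0)) (t, u) (0, 1)) u := by
  have h := my_slice2 (my_fderiv_apply_smooth hX hS (1, 0)) hS hp
  exact h.congr_of_eventuallyEq
    (Eventually.of_forall fun v => (my_slice1 hX hS (hall v)).deriv)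

theorem my_key (ε : ℝ) (x y f : ℝ → ℝ → ℝ)
    (hsm : ContDiffOn ℝ (⊤ : ℕ∞)
      (fun p : ℝ × ℝ => (x p.1 p.2, y p.1 p.2, f p.1 p.2)) (Ioo (-ε) ε ×ˢ (univ : Set ℝ)))
    (himm : ∀ t ∈ Ioo (-ε) ε, ∀ u : ℝ, 0 < (pu x t u)^2 + (pu y t u)^2)
    (hxt : ∀ t ∈ Ioo (-ε) ε, ∀ u : ℝ, deriv (fun s => x s u) t =
      -(pu f t u) * pu y t u / ((pu x t u)^2 + (pu y t u)^2))
    (hyt : ∀ t ∈ Ioo (-ε) ε, ∀ u : ℝ, deriv (fun s => y s u) t =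
      pu f t u * pu x t u / ((pu x t u)^2 + (pu y t u)^2)) :
    ∀ t ∈ Ioo (-ε) ε, ∀ u : ℝ,
      HasDerivAt (fun s => speed x y s u) (-(curv x y t u * pu f t u)) t := by
  intro t ht u
  have hS : IsOpen (Ioo (-ε) ε ×ˢ (univ : Set ℝ)) := isOpen_Ioo.prod isOpen_univ
  have hX : ContDiffOn ℝ (⊤ : ℕ∞) (fun p : ℝ × ℝ => x p.1 p.2) (Ioo (-ε) ε ×ˢ (univ : Set ℝ)) :=
    contDiff_fst.comp_contDiffOn hsm
  have hY : ContDiffOn ℝ (⊤ : ℕ∞) (fun p : ℝ × ℝ => y p.1 p.2) (Ioo (-ε) ε ×ˢ (univ : Set ℝ)) :=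
    (contDiff_fst.comp contDiff_snd).comp_contDiffOn hsm
  have hp : ((t, u) : ℝ × ℝ) ∈ Ioo (-ε) ε ×ˢ (univ : Set ℝ) := ⟨ht, mem_univ u⟩
  have hall : ∀ v : ℝ, ((t, v) : ℝ × ℝ) ∈ Ioo (-ε) ε ×ˢ (univ : Set ℝ) :=
    fun v => ⟨ht, mem_univ v⟩
  have hev : ∀ᶠ s in nhds t, ((s, u) : ℝ × ℝ) ∈ Ioo (-ε) ε ×ˢ (univ : Set ℝ) := by
    filter_upwards [isOpen_Ioo.mem_nhds ht] with s hs
    exact ⟨hs, mem_univ u⟩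
  -- derivatives in time of pu x, pu y
  have h1x := my_pu_hasDerivAt_time hX hS hp hev
  have h1y := my_pu_hasDerivAt_time hY hS hp hev
  set Ax := fderiv ℝ (fun q => fderiv ℝ (fun p : ℝ × ℝ => x p.1 p.2) q (1, 0)) (t, u) (0, 1)
    with hAx
  set Ay := fderiv ℝ (fun q => fderiv ℝ (fun p : ℝ × ℝ => y p.1 p.2) q (1, 0)) (t, u) (0, 1)
    with hAy
  -- derivatives in space of pu x, pu y at (t, ·)
  have h2x := my_pu_hasDerivAt_space hX hS hp hall
  have h2y := my_pu_hasDerivAt_space hY hS hp hall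
  rw [← my_puu_eq hX hS hp hall] at h2x
  rw [← my_puu_eq hY hS hp hall] at h2y
  -- derivatives in space of the time-derivatives
  have hφx : HasDerivAt
      (fun v => -(pu f t v) * pu y t v / ((pu x t v)^2 + (pu y t v)^2)) Ax u :=
    (my_pt_hasDerivAt_space hX hS hp hall).congr_of_eventuallyEq
      (Eventually.of_forall fun v => (hxt t ht v).symm)
  have hφy : HasDerivAt
      (fun v => pu f t v * pu x t v / ((pu x t v)^2 + (pu y t v)^2)) Ay u :=
    (my_pt_hasDerivAt_space hY hS hp hall).congr_of_eventuallyEq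
      (Eventually.of_forall fun v => (hyt t ht v).symm)
  -- the product P ≡ 0
  have hP := (h2x.mul hφx).add (h2y.mul hφy)
  have hPzero : (fun v => pu x t v * (-(pu f t v) * pu y t v / ((pu x t v)^2 + (pu y t v)^2))
      + pu y t v * (pu f t v * pu x t v / ((pu x t v)^2 + (pu y t v)^2)))
      = fun _ : ℝ => (0 : ℝ) := funext fun v => by ring
  replace hP : HasDerivAt (fun _ : ℝ => (0:ℝ)) (puu x t u * (-pu f t u * pu y t u / (pu x t u ^ 2 + pu y t u ^ 2)) + pu x t u * Ax +
      (puu y t u * (pu f t u * pu x t u / (pu x t u ^ 2 + pu y t u ^ 2)) + pu y t u * Ay)) u := by rw [← hPzero]; exact hP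
  have hsum := hP.unique (hasDerivAt_const u 0)
  -- derivative of the speed
  have hr2 := himm t ht u
  have hq := (h1x.pow 2).add (h1y.pow 2)
  have hsq := (Real.hasDerivAt_sqrt hr2.ne').comp t hq
  have hfinal : HasDerivAt (fun s => speed x y s u)
      (1 / (2 * Real.sqrt ((pu x t u)^2 + (pu y t u)^2))
        * ((2 : ℝ) * pu x t u ^ (2 - 1) * Ax + (2 : ℝ) * pu y t u ^ (2 - 1) * Ay)) t := hsq
  have hr : 0 < Real.sqrt ((pu x t u)^2 + (pu y t u)^2) := Real.sqrt_pos.2 hr2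
  have h32 : ((pu x t u)^2 + (pu y t u)^2) ^ ((3:ℝ)/2)
      = ((pu x t u)^2 + (pu y t u)^2) * Real.sqrt ((pu x t u)^2 + (pu y t u)^2) := by
    rw [show (3:ℝ)/2 = 1 + 1/2 by norm_num, Real.rpow_add hr2, Real.rpow_one,
      ← Real.sqrt_eq_rpow]
  have hval : -(curv x y t u * pu f t u)
      = 1 / (2 * Real.sqrt ((pu x t u)^2 + (pu y t u)^2))
        * ((2 : ℝ) * pu x t u ^ (2 - 1) * Ax + (2 : ℝ) * pu y t u ^ (2 - 1) * Ay) := by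
    have hsqr : Real.sqrt ((pu x t u)^2 + (pu y t u)^2) ^ 2
        = (pu x t u)^2 + (pu y t u)^2 := Real.sq_sqrt hr2.le
    simp only [curv, h32, pow_one]
    field_simp at hsum ⊢
    simp only [show (2:ℕ) - 1 = 1 from rfl, pow_one] at hsum ⊢
    nlinarith [hsum, hsqr, hr, hr2, sq_nonneg (pu x t u), sq_nonneg (pu y t u)]
  exact hval ▸ hfinal

/-- Continuity of `pu` jointly on an open set. -/
theorem my_pu_contOn {x : ℝ → ℝ → ℝ} {S : Set (ℝ × ℝ)}
    (hX : ContDiffOn ℝ (⊤ : ℕ∞) (fun p : ℝ × ℝ => x p.1 p.2) S) (hS : IsOpen S) :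
    ContinuousOn (fun p : ℝ × ℝ => pu x p.1 p.2) S :=
  ((my_fderiv_apply_smooth hX hS (0, 1)).continuousOn).congr fun p hp => my_pu_eq hX hS hp

/-- Continuity of `puu` jointly on a product open set. -/
theorem my_puu_contOn {x : ℝ → ℝ → ℝ} {I : Set ℝ} (hI : IsOpen I)
    (hX : ContDiffOn ℝ (⊤ : ℕ∞) (fun p : ℝ × ℝ => x p.1 p.2) (I ×ˢ (univ : Set ℝ))) :
    ContinuousOn (fun p : ℝ × ℝ => puu x p.1 p.2) (I ×ˢ (univ : Set ℝ)) := by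
  have hS : IsOpen (I ×ˢ (univ : Set ℝ)) := hI.prod isOpen_univ
  refine ((my_fderiv_apply_smooth (my_fderiv_apply_smooth hX hS (0, 1)) hS
    (0, 1)).continuousOn).congr fun p hp => ?_
  exact my_puu_eq hX hS hp fun v => ⟨hp.1, mem_univ v⟩

/-- Joint continuity of the integrand `curv * pu f`. -/
theorem my_integrand_contOn (ε : ℝ) (x y f : ℝ → ℝ → ℝ)
    (hsm : ContDiffOn ℝ (⊤ : ℕ∞)
      (fun p : ℝ × ℝ => (x p.1 p.2, y p.1 p.2, f p.1 p.2)) (Ioo (-ε) ε ×ˢ (univ : Set ℝ)))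
    (himm : ∀ t ∈ Ioo (-ε) ε, ∀ u : ℝ, 0 < (pu x t u)^2 + (pu y t u)^2) :
    ContinuousOn (fun p : ℝ × ℝ => curv x y p.1 p.2 * pu f p.1 p.2)
      (Ioo (-ε) ε ×ˢ (univ : Set ℝ)) := by
  have hS : IsOpen (Ioo (-ε) ε ×ˢ (univ : Set ℝ)) := isOpen_Ioo.prod isOpen_univ
  have hX : ContDiffOn ℝ (⊤ : ℕ∞) (fun p : ℝ × ℝ => x p.1 p.2) (Ioo (-ε) ε ×ˢ (univ : Set ℝ)) :=
    contDiff_fst.comp_contDiffOn hsm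
  have hY : ContDiffOn ℝ (⊤ : ℕ∞) (fun p : ℝ × ℝ => y p.1 p.2) (Ioo (-ε) ε ×ˢ (univ : Set ℝ)) :=
    (contDiff_fst.comp contDiff_snd).comp_contDiffOn hsm
  have hF : ContDiffOn ℝ (⊤ : ℕ∞) (fun p : ℝ × ℝ => f p.1 p.2) (Ioo (-ε) ε ×ˢ (univ : Set ℝ)) :=
    (contDiff_snd.comp contDiff_snd).comp_contDiffOn hsm
  have hpux := my_pu_contOn hX hS
  have hpuy := my_pu_contOn hY hS
  have hpuf := my_pu_contOn hF hS
  have hpuux := my_puu_contOn isOpen_Ioo hX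
  have hpuuy := my_puu_contOn isOpen_Ioo hY
  have hQ : ContinuousOn (fun p : ℝ × ℝ => (pu x p.1 p.2)^2 + (pu y p.1 p.2)^2)
      (Ioo (-ε) ε ×ˢ (univ : Set ℝ)) := (hpux.pow 2).add (hpuy.pow 2)
  have hQpos : ∀ p ∈ Ioo (-ε) ε ×ˢ (univ : Set ℝ),
      0 < (pu x p.1 p.2)^2 + (pu y p.1 p.2)^2 := fun p hp => himm p.1 hp.1 p.2
  have hQ32 : ContinuousOn
      (fun p : ℝ × ℝ => ((pu x p.1 p.2)^2 + (pu y p.1 p.2)^2) ^ ((3:ℝ)/2))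
      (Ioo (-ε) ε ×ˢ (univ : Set ℝ)) :=
    hQ.rpow_const fun p hp => Or.inl (hQpos p hp).ne'
  have hcurv : ContinuousOn (fun p : ℝ × ℝ => curv x y p.1 p.2)
      (Ioo (-ε) ε ×ˢ (univ : Set ℝ)) := by
    refine ContinuousOn.div ((hpux.mul hpuuy).sub (hpuy.mul hpuux)) hQ32 fun p hp => ?_
    exact (Real.rpow_pos_of_pos (hQpos p hp) _).ne'
  exact hcurv.mul hpuf

/-- Joint continuity of the speed. -/
theorem my_speed_contOn {x y : ℝ → ℝ → ℝ} {S : Set (ℝ × ℝ)}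
    (hX : ContDiffOn ℝ (⊤ : ℕ∞) (fun p : ℝ × ℝ => x p.1 p.2) S)
    (hY : ContDiffOn ℝ (⊤ : ℕ∞) (fun p : ℝ × ℝ => y p.1 p.2) S) (hS : IsOpen S) :
    ContinuousOn (fun p : ℝ × ℝ => speed x y p.1 p.2) S :=
  Real.continuous_sqrt.comp_continuousOn
    (((my_pu_contOn hX hS).pow 2).add ((my_pu_contOn hY hS).pow 2))

/-- Continuity in `u` of a slice of a function continuous on `Ioo ×ˢ univ`. -/
theorem my_slice_cont {g : ℝ × ℝ → ℝ} {I : Set ℝ}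
    (hg : ContinuousOn g (I ×ˢ (univ : Set ℝ))) {s : ℝ} (hs : s ∈ I) :
    Continuous (fun u => g (s, u)) := by
  rw [← continuousOn_univ]
  exact hg.comp (Continuous.continuousOn (by fun_prop)) fun u _ => ⟨hs, mem_univ u⟩

/-- first variation of length along a Legendrian normal variation:
if `x_t = −f_u·y_u/(x_u²+y_u²)` and `y_t = f_u·x_u/(x_u²+y_u²)`, then the length
`L(t) = ∫₀^{2π} √(x_u²+y_u²) du` satisfies `dL/dt = −∫₀^{2π} κ·f_u du`. -/
theorem statement17 (ε : ℝ) (hε : 0 < ε) (x y f : ℝ → ℝ → ℝ)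
    (hsm : ContDiffOn ℝ (⊤ : ℕ∞)
      (fun p : ℝ × ℝ => (x p.1 p.2, y p.1 p.2, f p.1 p.2)) (Ioo (-ε) ε ×ˢ (univ : Set ℝ)))
    (hper : ∀ t ∈ Ioo (-ε) ε, Function.Periodic (x t) (2*π) ∧
      Function.Periodic (y t) (2*π) ∧ Function.Periodic (f t) (2*π))
    (himm : ∀ t ∈ Ioo (-ε) ε, ∀ u : ℝ, 0 < (pu x t u)^2 + (pu y t u)^2)
    (hxt : ∀ t ∈ Ioo (-ε) ε, ∀ u : ℝ, deriv (fun s => x s u) t =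
      -(pu f t u) * pu y t u / ((pu x t u)^2 + (pu y t u)^2))
    (hyt : ∀ t ∈ Ioo (-ε) ε, ∀ u : ℝ, deriv (fun s => y s u) t =
      pu f t u * pu x t u / ((pu x t u)^2 + (pu y t u)^2)) :
    ∀ t ∈ Ioo (-ε) ε, HasDerivAt (fun s => ∫ u in (0:ℝ)..(2*π), speed x y s u)
      (-∫ u in (0:ℝ)..(2*π), curv x y t u * pu f t u) t := by
  intro t ht
  have hS : IsOpen (Ioo (-ε) ε ×ˢ (univ : Set ℝ)) := isOpen_Ioo.prod isOpen_univ
  have hX : ContDiffOn ℝ (⊤ : ℕ∞) (fun p : ℝ × ℝ => x p.1 p.2) (Ioo (-ε) ε ×ˢ (univ : Set ℝ)) :=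
    contDiff_fst.comp_contDiffOn hsm
  have hY : ContDiffOn ℝ (⊤ : ℕ∞) (fun p : ℝ × ℝ => y p.1 p.2) (Ioo (-ε) ε ×ˢ (univ : Set ℝ)) :=
    (contDiff_fst.comp contDiff_snd).comp_contDiffOn hsm
  obtain ⟨δ, δpos, hδ⟩ : ∃ δ > 0, Metric.closedBall t δ ⊆ Ioo (-ε) ε :=
    (Metric.nhds_basis_closedBall.mem_iff).1 (isOpen_Ioo.mem_nhds ht)
  -- bound on the compact set
  have hKS : Metric.closedBall t δ ×ˢ Icc (0:ℝ) (2*π) ⊆ Ioo (-ε) ε ×ˢ (univ : Set ℝ) :=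
    prod_mono hδ (subset_univ _)
  have hK : IsCompact (Metric.closedBall t δ ×ˢ Icc (0:ℝ) (2*π)) :=
    (isCompact_closedBall t δ).prod isCompact_Icc
  obtain ⟨C, hC⟩ := hK.exists_bound_of_continuousOn
    ((my_integrand_contOn ε x y f hsm himm).mono hKS)
  have hIsub : Set.uIoc (0:ℝ) (2*π) ⊆ Icc (0:ℝ) (2*π) := by
    rw [uIoc_of_le (by positivity)]
    exact Ioc_subset_Icc_self
  have key := my_key ε x y f hsm himm hxt hyt
  have H := intervalIntegral.hasDerivAt_integral_of_dominated_loc_of_deriv_le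
    (F := fun s u => speed x y s u) (F' := fun s u => -(curv x y s u * pu f s u))
    (bound := fun _ => C) (μ := MeasureTheory.volume) (a := (0:ℝ)) (b := 2*π) (x₀ := t) (Metric.ball_mem_nhds t δpos)
    ?_ ?_ ?_ ?_ ?_ ?_
  · simpa [intervalIntegral.integral_neg] using H.2
  · -- measurability of speed slices
    filter_upwards [isOpen_Ioo.mem_nhds ht] with s hs
    exact (my_slice_cont (my_speed_contOn hX hY hS) hs).aestronglyMeasurable
  · -- integrability of the speed at t
    exact (my_slice_cont (my_speed_contOn hX hY hS) ht).intervalIntegrable 0 (2*π)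
  · -- measurability of F' at t
    exact ((my_slice_cont (my_integrand_contOn ε x y f hsm himm) ht).neg).aestronglyMeasurable
  · -- uniform bound
    refine MeasureTheory.ae_of_all _ fun u hu s hs => ?_
    rw [norm_neg]
    exact hC (s, u) ⟨Metric.ball_subset_closedBall hs, hIsub hu⟩
  · exact intervalIntegrable_const
  · -- differentiability
    refine MeasureTheory.ae_of_all _ fun u _ s hs => ?_
    exact key s (hδ (Metric.ball_subset_closedBall hs)) u
end
end
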